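/- arXiv:1202.1017 — 5 statements merged into one kernel-verified Lean document; each statement's English description precedes it below -/
import Mathlib

section
/- Let A = {r < |z| < R} with 0 < r < R < ∞. Suppose h : A → ℂ is locally in W^{1,1}, has nonnegative Jacobian almost everywhere, and satisfies h_z · conj(h_z̄) = c/z² a.e. for a real constant c. Writing h_N for the radial derivative and h_T for the (normalized) angular derivative of h in polar coordinates, one has a.e.: |h_N|² − |h_T|² = 4c/|z|², Re( conj(h_N) · h_T ) = 0, and J(z,h) = |h_N| · |h_T|. Consequently |h_N|² ≤ J(z,h) a.e. if c ≤ 0, and |h_T|² ≤ J(z,h) a.e. if c ≥ 0. -/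
open Complex MeasureTheory Real Filter
open scoped Classical Topology

/-- Wirtinger derivative ∂f/∂z. -/
noncomputable def wdz (f : ℂ → ℂ) (z : ℂ) : ℂ :=
  (fderiv ℝ f z 1 - Complex.I * fderiv ℝ f z Complex.I) / 2

/-- Wirtinger derivative ∂f/∂z̄. -/
noncomputable def wdzbar (f : ℂ → ℂ) (z : ℂ) : ℂ :=
  (fderiv ℝ f z 1 + Complex.I * fderiv ℝ f z Complex.I) / 2

/-- Jacobian determinant J(z,f) = |f_z|² − |f_z̄|². -/
noncomputable def jac (f : ℂ → ℂ) (z : ℂ) : ℝ :=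
  ‖wdz f z‖ ^ 2 - ‖wdzbar f z‖ ^ 2

/-- Normal (radial) derivative of f at z: derivative in direction z/|z|. -/
noncomputable def dN (f : ℂ → ℂ) (z : ℂ) : ℂ :=
  fderiv ℝ f z (z / (‖z‖ : ℂ))

/-- Tangential (normalized angular) derivative of f at z: derivative in direction i z/|z|. -/
noncomputable def dT (f : ℂ → ℂ) (z : ℂ) : ℂ :=
  fderiv ℝ f z (Complex.I * z / (‖z‖ : ℂ))


/-!
Write `p = h_z`, `q = h_z̄` and `u = z / |z|`. Then `h_N = p u + q ū` and `h_T = i (p u - q ū)`, so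
`conj h_N · h_T = -2 Im (p q̄ u²) + i J` and `|h_N|² - |h_T|² = 4 Re (p q̄ u²)`. The Hopf equation
makes `p q̄ u² = c / |z|²` real, hence `conj h_N · h_T = i J`; taking moduli gives
`|h_N| |h_T| = |J| = J`, and the two inequalities follow by comparing `|h_N|` with `|h_T|`.
-/

open ComplexConjugate

namespace Complex

lemma neg_two_mul_im (w : ℂ) : (-2 * w.im : ℂ) = I * (w - conj w) := by
  rw [im_eq_sub_conj]
  field_simp
  linear_combination (conj w - w) * I_sq

variable {p q u : ℂ}

lemma conj_add_mul_I_mul_sub (hu : ‖u‖ = 1) :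
    conj (p * u + q * conj u) * (I * (p * u - q * conj u)) =
      -2 * (p * conj q * u ^ 2).im + (‖p‖ ^ 2 - ‖q‖ ^ 2 : ℝ) * I := by
  have huu : u * conj u = 1 := by rw [mul_conj', hu]; norm_num
  rw [neg_two_mul_im]
  push_cast
  rw [← mul_conj', ← mul_conj']
  simp only [map_mul, map_add, map_pow, conj_conj]
  linear_combination I * (p * conj p - q * conj q) * huu

lemma sq_norm_add_sub_sq_norm_sub :
    ‖p * u + q * conj u‖ ^ 2 - ‖p * u - q * conj u‖ ^ 2 = 4 * (p * conj q * u ^ 2).re := by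
  apply ofReal_injective
  push_cast
  rw [← mul_conj', ← mul_conj', re_eq_add_conj]
  simp only [map_mul, map_add, map_sub, map_pow, conj_conj]
  ring

end Complex

lemma fderiv_apply_eq_wdz_mul_add_wdzbar_mul (f : ℂ → ℂ) (z w : ℂ) :
    fderiv ℝ f z w = wdz f z * w + wdzbar f z * conj w := by
  have hw : w = w.re • (1 : ℂ) + w.im • I := by simp [real_smul, re_add_im]
  conv_lhs => rw [hw]
  rw [map_add, map_smul, map_smul, real_smul, real_smul, re_eq_add_conj, im_eq_sub_conj,
    wdz, wdzbar]
  field_simp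
  linear_combination (fderiv ℝ f z I * (w - conj w)) * I_sq

lemma dN_eq (f : ℂ → ℂ) (z : ℂ) :
    dN f z = wdz f z * (z / ‖z‖) + wdzbar f z * conj (z / ‖z‖) :=
  fderiv_apply_eq_wdz_mul_add_wdzbar_mul f z _

lemma dT_eq (f : ℂ → ℂ) (z : ℂ) :
    dT f z = I * (wdz f z * (z / ‖z‖) - wdzbar f z * conj (z / ‖z‖)) := by
  rw [dT, mul_div_assoc, fderiv_apply_eq_wdz_mul_add_wdzbar_mul, map_mul, conj_I]
  ring

lemma div_sq_mul_div_norm_sq (c : ℝ) {z : ℂ} (hz : z ≠ 0) :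
    c / z ^ 2 * (z / ‖z‖) ^ 2 = ((c / ‖z‖ ^ 2 : ℝ) : ℂ) := by
  have : (‖z‖ : ℂ) ≠ 0 := by simpa using hz
  push_cast
  field_simp

lemma sq_le_mul_of_sq_le_sq {a b : ℝ} (ha : 0 ≤ a) (hb : 0 ≤ b) (h : a ^ 2 ≤ b ^ 2) :
    a ^ 2 ≤ a * b := by
  have : a ≤ b := (pow_le_pow_iff_left₀ ha hb two_ne_zero).mp h
  nlinarith

theorem polar_derivatives_of_hopf {f : ℂ → ℂ} {z : ℂ} {c : ℝ} (hz : z ≠ 0)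
    (hJ : 0 ≤ jac f z) (hHopf : wdz f z * conj (wdzbar f z) = c / z ^ 2) :
    ‖dN f z‖ ^ 2 - ‖dT f z‖ ^ 2 = 4 * c / ‖z‖ ^ 2 ∧
      (conj (dN f z) * dT f z).re = 0 ∧
      jac f z = ‖dN f z‖ * ‖dT f z‖ ∧
      (c ≤ 0 → ‖dN f z‖ ^ 2 ≤ jac f z) ∧
      (0 ≤ c → ‖dT f z‖ ^ 2 ≤ jac f z) := by
  have hu : ‖z / ‖z‖‖ = 1 := by simp [hz]
  have hw : wdz f z * conj (wdzbar f z) * (z / ‖z‖) ^ 2 = ((c / ‖z‖ ^ 2 : ℝ) : ℂ) := by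
    rw [hHopf, div_sq_mul_div_norm_sq c hz]
  have hdiff : ‖dN f z‖ ^ 2 - ‖dT f z‖ ^ 2 = 4 * c / ‖z‖ ^ 2 := by
    rw [dN_eq, dT_eq, norm_mul, norm_I, one_mul, sq_norm_add_sub_sq_norm_sub, hw, ofReal_re]
    ring
  have hcross : conj (dN f z) * dT f z = jac f z * I := by
    rw [dN_eq, dT_eq, conj_add_mul_I_mul_sub hu, hw, ofReal_im, jac]
    simp
  have hprod : ‖dN f z‖ * ‖dT f z‖ = jac f z := by
    rw [← RCLike.norm_conj (dN f z), ← norm_mul, hcross, norm_mul, norm_I, mul_one,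
      norm_real, Real.norm_of_nonneg hJ]
  have hnorm_sq : 0 < ‖z‖ ^ 2 := by positivity
  refine ⟨hdiff, by simp [hcross], hprod.symm, fun hc => ?_, fun hc => ?_⟩
  · rw [← hprod]
    refine sq_le_mul_of_sq_le_sq (norm_nonneg _) (norm_nonneg _) ?_
    nlinarith [div_nonpos_of_nonpos_of_nonneg (by linarith : 4 * c ≤ 0) hnorm_sq.le]
  · rw [← hprod, mul_comm]
    refine sq_le_mul_of_sq_le_sq (norm_nonneg _) (norm_nonneg _) ?_
    nlinarith [div_nonneg (by linarith : 0 ≤ 4 * c) hnorm_sq.le]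

theorem stmt5_general (c : ℝ)
    (A : Set ℂ)
    (h : ℂ → ℂ)
    (hJ : ∀ᵐ z ∂(volume.restrict A), 0 ≤ jac h z)
    (hHopf : ∀ᵐ z ∂(volume.restrict A),
      wdz h z * (starRingEnd ℂ) (wdzbar h z) = (c : ℂ) / z ^ 2) :
    ∀ᵐ z ∂(volume.restrict A),
      ‖dN h z‖ ^ 2 - ‖dT h z‖ ^ 2 = 4 * c / (‖z‖) ^ 2 ∧
      ((starRingEnd ℂ) (dN h z) * dT h z).re = 0 ∧
      jac h z = ‖dN h z‖ * ‖dT h z‖ ∧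
      (c ≤ 0 → ‖dN h z‖ ^ 2 ≤ jac h z) ∧
      (0 ≤ c → ‖dT h z‖ ^ 2 ≤ jac h z) := by
  filter_upwards [Measure.ae_ne _ 0, hJ, hHopf] with z hz hJz hHopfz
  exact polar_derivatives_of_hopf hz hJz hHopfz

/-- Polar-coordinate consequences of the Hopf-Laplace equation h_z conj(h_z̄) = c/z². -/
theorem stmt5 (r R c : ℝ) (hr : 0 < r) (hrR : r < R)
    (A : Set ℂ) (hA : A = {z : ℂ | r < ‖z‖ ∧ ‖z‖ < R})
    (h : ℂ → ℂ)
    (hreg : ∀ᵐ z ∂(volume.restrict A), DifferentiableAt ℝ h z)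
    (hJ : ∀ᵐ z ∂(volume.restrict A), 0 ≤ jac h z)
    (hHopf : ∀ᵐ z ∂(volume.restrict A),
      wdz h z * (starRingEnd ℂ) (wdzbar h z) = (c : ℂ) / z ^ 2) :
    ∀ᵐ z ∂(volume.restrict A),
      ‖dN h z‖ ^ 2 - ‖dT h z‖ ^ 2 = 4 * c / (‖z‖) ^ 2 ∧
      ((starRingEnd ℂ) (dN h z) * dT h z).re = 0 ∧
      jac h z = ‖dN h z‖ * ‖dT h z‖ ∧
      (c ≤ 0 → ‖dN h z‖ ^ 2 ≤ jac h z) ∧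
      (0 ≤ c → ‖dT h z‖ ^ 2 ≤ jac h z) :=
  stmt5_general c A h hJ hHopf
end

section
/- Let h, H : X → ℂ be Sobolev W^{1,2} maps on an open set X ⊆ ℂ with J_h ≥ 0 and J_H ≥ 0 a.e., sharing the same Hopf product h_z conj(h_z̄) = H_z conj(H_z̄) = φ(z) ≠ 0 almost everywhere. Set F = H − h. Then a.e.: |F_z̄| = sqrt(k_h · k_H) · |F_z| where k_h = |h_z̄|/|h_z| ≤ 1 and k_H = |H_z̄|/|H_z| ≤ 1; in particular the Jacobian J_F = |F_z|² − |F_z̄|² is nonnegative almost everywhere, and |DF|² = 2(1 + k_h k_H)/(1 − k_h k_H) · J_F at points where k_h k_H < 1. -/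
open Complex MeasureTheory Real Filter
open scoped Classical Topology

open scoped ComplexConjugate

/-!
Write `a, b` for `h_z, h_z̄` and `A, B` for `H_z, H_z̄` at a point. Equality of the Hopf products,
`a b̄ = A B̄`, is exactly the identity `b (A - a)‾ = -(B - b) Ā`, i.e. `h_z̄ F̄_z = -F_z̄ H̄_z`.
Taking norms gives `|F_z̄| = (|b| / |A|) |F_z|`, and `|a| |b| = |A| |B|` identifies `|b| / |A|`
with `√(k_h k_H)`. Since `J_h, J_H ≥ 0` force `k_h, k_H ≤ 1`, the distortion and Jacobian claims
for `F` are then elementary consequences of `|F_z̄|² = k_h k_H |F_z|²`.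
-/

section HopfProduct

variable {a b A B : ℂ}

theorem mul_conj_sub_eq_neg_of_mul_conj_eq (hopf : a * conj b = A * conj B) :
    b * conj (A - a) = -((B - b) * conj A) := by
  have hopf' : conj a * b = conj A * B := by simpa using congrArg conj hopf
  rw [map_sub]
  linear_combination -hopf'

theorem norm_sub_eq_sqrt_mul_norm_sub (hopf : a * conj b = A * conj B) (ha : a ≠ 0)
    (hA : A ≠ 0) : ‖B - b‖ = √(‖b‖ / ‖a‖ * (‖B‖ / ‖A‖)) * ‖A - a‖ := by
  have hnorm : ‖b‖ * ‖A - a‖ = ‖B - b‖ * ‖A‖ := by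
    have := congrArg norm (mul_conj_sub_eq_neg_of_mul_conj_eq hopf)
    rwa [norm_mul, norm_neg, norm_mul, Complex.norm_conj, Complex.norm_conj] at this
  have hopf_norm : ‖a‖ * ‖b‖ = ‖A‖ * ‖B‖ := by simpa using congrArg norm hopf
  have ha' : ‖a‖ ≠ 0 := norm_ne_zero_iff.mpr ha
  have hA' : ‖A‖ ≠ 0 := norm_ne_zero_iff.mpr hA
  have hk : ‖b‖ / ‖a‖ * (‖B‖ / ‖A‖) = (‖b‖ / ‖A‖) ^ 2 := by
    field_simp
    linear_combination -‖b‖ * hopf_norm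
  rw [hk, Real.sqrt_sq (by positivity)]
  field_simp
  linarith

end HopfProduct

section Distortion

variable {x y k : ℝ}

theorem sq_sub_sq_nonneg_of_eq_sqrt_mul (hk : k ≤ 1) (hy : y = √k * x) : 0 ≤ x ^ 2 - y ^ 2 := by
  have hsqrt : √k ≤ 1 := Real.sqrt_le_one.mpr hk
  have : √k ^ 2 * x ^ 2 ≤ x ^ 2 :=
    mul_le_of_le_one_left (sq_nonneg x) (pow_le_one₀ (Real.sqrt_nonneg k) hsqrt)
  rw [hy]
  linarith [mul_pow (√k) x 2]

theorem two_mul_sq_add_sq_eq_of_eq_sqrt_mul (hk₀ : 0 ≤ k) (hk : k < 1) (hy : y = √k * x) :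
    2 * (x ^ 2 + y ^ 2) = 2 * (1 + k) / (1 - k) * (x ^ 2 - y ^ 2) := by
  have hy2 : y ^ 2 = k * x ^ 2 := by rw [hy, mul_pow, Real.sq_sqrt hk₀]
  have : 1 - k ≠ 0 := by linarith
  rw [hy2]
  field_simp

end Distortion

section Wirtinger

variable {f g : ℂ → ℂ} {z : ℂ}

theorem wdz_sub (hf : DifferentiableAt ℝ f z) (hg : DifferentiableAt ℝ g z) :
    wdz (fun w => f w - g w) z = wdz f z - wdz g z := by
  simp only [wdz, fderiv_fun_sub hf hg, sub_apply]
  ring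

theorem wdzbar_sub (hf : DifferentiableAt ℝ f z) (hg : DifferentiableAt ℝ g z) :
    wdzbar (fun w => f w - g w) z = wdzbar f z - wdzbar g z := by
  simp only [wdzbar, fderiv_fun_sub hf hg, sub_apply]
  ring

theorem norm_wdzbar_div_norm_wdz_le_one (hJ : 0 ≤ jac f z) : ‖wdzbar f z‖ / ‖wdz f z‖ ≤ 1 := by
  have : ‖wdzbar f z‖ ≤ ‖wdz f z‖ :=
    (pow_le_pow_iff_left₀ (norm_nonneg _) (norm_nonneg _) two_ne_zero).mp
      (sub_nonneg.mp hJ)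
  exact div_le_one_of_le₀ this (norm_nonneg _)

end Wirtinger

theorem stmt6_general (X : Set ℂ) (h H φ : ℂ → ℂ)
    (hreg : ∀ᵐ z ∂(volume.restrict X), DifferentiableAt ℝ h z ∧ DifferentiableAt ℝ H z)
    (hJh : ∀ᵐ z ∂(volume.restrict X), 0 ≤ jac h z)
    (hJH : ∀ᵐ z ∂(volume.restrict X), 0 ≤ jac H z)
    (hHopf : ∀ᵐ z ∂(volume.restrict X),
      wdz h z * (starRingEnd ℂ) (wdzbar h z) = φ z ∧
      wdz H z * (starRingEnd ℂ) (wdzbar H z) = φ z ∧ φ z ≠ 0)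
    (F : ℂ → ℂ) (hF : ∀ z, F z = H z - h z) :
    ∀ᵐ z ∂(volume.restrict X),
      ‖wdzbar h z‖ / ‖wdz h z‖ ≤ 1 ∧
      ‖wdzbar H z‖ / ‖wdz H z‖ ≤ 1 ∧
      ‖wdzbar F z‖
        = Real.sqrt ((‖wdzbar h z‖ / ‖wdz h z‖) * (‖wdzbar H z‖ / ‖wdz H z‖)) * ‖wdz F z‖ ∧
      0 ≤ jac F z ∧
      ((‖wdzbar h z‖ / ‖wdz h z‖) * (‖wdzbar H z‖ / ‖wdz H z‖) < 1 →
        2 * (‖wdz F z‖ ^ 2 + ‖wdzbar F z‖ ^ 2)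
          = 2 * (1 + (‖wdzbar h z‖ / ‖wdz h z‖) * (‖wdzbar H z‖ / ‖wdz H z‖))
            / (1 - (‖wdzbar h z‖ / ‖wdz h z‖) * (‖wdzbar H z‖ / ‖wdz H z‖)) * jac F z) := by
  obtain rfl : F = fun w => H w - h w := funext hF
  filter_upwards [hreg, hJh, hJH, hHopf] with z ⟨hdh, hdH⟩ hJh hJH ⟨hopf_h, hopf_H, hφ⟩
  have hkh := norm_wdzbar_div_norm_wdz_le_one hJh
  have hkH := norm_wdzbar_div_norm_wdz_le_one hJH
  have hdist : ‖wdzbar (fun w => H w - h w) z‖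
      = √(‖wdzbar h z‖ / ‖wdz h z‖ * (‖wdzbar H z‖ / ‖wdz H z‖))
        * ‖wdz (fun w => H w - h w) z‖ := by
    rw [wdz_sub hdH hdh, wdzbar_sub hdH hdh]
    exact norm_sub_eq_sqrt_mul_norm_sub (hopf_h.trans hopf_H.symm)
      (left_ne_zero_of_mul (hopf_h ▸ hφ)) (left_ne_zero_of_mul (hopf_H ▸ hφ))
  refine ⟨hkh, hkH, hdist, ?_, fun hk => ?_⟩
  · exact sq_sub_sq_nonneg_of_eq_sqrt_mul (mul_le_one₀ hkh (by positivity) hkH) hdist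
  · exact two_mul_sq_add_sq_eq_of_eq_sqrt_mul (by positivity) hk hdist

/-- Distortion of the difference of two solutions sharing the same nonvanishing Hopf product. -/
theorem stmt6 (X : Set ℂ) (hX : IsOpen X) (h H φ : ℂ → ℂ)
    (hreg : ∀ᵐ z ∂(volume.restrict X), DifferentiableAt ℝ h z ∧ DifferentiableAt ℝ H z)
    (hJh : ∀ᵐ z ∂(volume.restrict X), 0 ≤ jac h z)
    (hJH : ∀ᵐ z ∂(volume.restrict X), 0 ≤ jac H z)
    (hHopf : ∀ᵐ z ∂(volume.restrict X),
      wdz h z * (starRingEnd ℂ) (wdzbar h z) = φ z ∧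
      wdz H z * (starRingEnd ℂ) (wdzbar H z) = φ z ∧ φ z ≠ 0)
    (F : ℂ → ℂ) (hF : ∀ z, F z = H z - h z) :
    ∀ᵐ z ∂(volume.restrict X),
      ‖wdzbar h z‖ / ‖wdz h z‖ ≤ 1 ∧
      ‖wdzbar H z‖ / ‖wdz H z‖ ≤ 1 ∧
      ‖wdzbar F z‖
        = Real.sqrt ((‖wdzbar h z‖ / ‖wdz h z‖) * (‖wdzbar H z‖ / ‖wdz H z‖)) * ‖wdz F z‖ ∧
      0 ≤ jac F z ∧
      ((‖wdzbar h z‖ / ‖wdz h z‖) * (‖wdzbar H z‖ / ‖wdz H z‖) < 1 →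
        2 * (‖wdz F z‖ ^ 2 + ‖wdzbar F z‖ ^ 2)
          = 2 * (1 + (‖wdzbar h z‖ / ‖wdz h z‖) * (‖wdzbar H z‖ / ‖wdz H z‖))
            / (1 - (‖wdzbar h z‖ / ‖wdz h z‖) * (‖wdzbar H z‖ / ‖wdz H z‖)) * jac F z) :=
  stmt6_general X h H φ hreg hJh hJH hHopf F hF
end

section
/- Let h : G → Y and H : X → Y be orientation-preserving C^∞ diffeomorphisms between bounded planar domains with finite Dirichlet energy, and set f = H^{-1} ∘ h : G → X. Then E_X[H] − E_G[h] = 4 ∬_G [ |f_z − γ(z) f_z̄|² / (|f_z|² − |f_z̄|²) − 1 ] · |h_z h_z̄| dA + 4 ∬_G ( |h_z| − |h_z̄| )² |f_z̄|² / (|f_z|² − |f_z̄|²) dA, where γ(z) = h_z conj(h_z̄) / |h_z conj(h_z̄)| when h_z conj(h_z̄) ≠ 0 and γ(z) = 0 otherwise. -/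
open Complex MeasureTheory Real Filter
open scoped Classical Topology

/-- Dirichlet energy E_Ω[u] = 2∬_Ω (|u_z|² + |u_z̄|²). -/
noncomputable def energy (Ω : Set ℂ) (u : ℂ → ℂ) : ℝ :=
  2 * ∫ z in Ω, (‖wdz u z‖ ^ 2 + ‖wdzbar u z‖ ^ 2)

/-- The unimodular factor γ(z) of the Hopf product of h. -/
noncomputable def gammaFn (h : ℂ → ℂ) (z : ℂ) : ℂ :=
  if wdz h z * (starRingEnd ℂ) (wdzbar h z) = 0 then 0
  else wdz h z * (starRingEnd ℂ) (wdzbar h z)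
    / (‖wdz h z * (starRingEnd ℂ) (wdzbar h z)‖ : ℂ)

/- ### Auxiliary lemmas -/

lemma norm_sq_complex (w : ℂ) : ‖w‖ ^ 2 = w.re ^ 2 + w.im ^ 2 := by
  rw [Complex.sq_norm, Complex.normSq_apply]; ring

lemma clm_eval (L : ℂ →L[ℝ] ℂ) (v : ℂ) :
    L v = (L 1 - Complex.I * L Complex.I) / 2 * v
        + (L 1 + Complex.I * L Complex.I) / 2 * (starRingEnd ℂ) v := by
  have hv : v = v.re • (1:ℂ) + v.im • Complex.I := by
    simp [Complex.ext_iff]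
  rw [hv, map_add, _root_.map_smul, _root_.map_smul]
  simp only [Complex.real_smul, map_add, map_mul, Complex.conj_ofReal, Complex.conj_I,
    map_one]
  ring_nf
  simp only [Complex.I_sq]
  ring

lemma fderiv_eval (u : ℂ → ℂ) (z v : ℂ) :
    fderiv ℝ u z v = wdz u z * v + wdzbar u z * (starRingEnd ℂ) v := by
  simpa [wdz, wdzbar] using clm_eval (fderiv ℝ u z) v

lemma det_formula (L : ℂ →L[ℝ] ℂ) :
    L.det = ‖(L 1 - Complex.I * L Complex.I) / 2‖ ^ 2
          - ‖(L 1 + Complex.I * L Complex.I) / 2‖ ^ 2 := by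
  rw [ContinuousLinearMap.det, ← LinearMap.det_toMatrix Complex.basisOneI]
  have h2 : (LinearMap.toMatrix Complex.basisOneI Complex.basisOneI L.toLinearMap).det
      = (L 1).re * (L Complex.I).im - (L Complex.I).re * (L 1).im := by
    rw [Matrix.det_fin_two]
    simp [LinearMap.toMatrix_apply]
  rw [h2, norm_sq_complex, norm_sq_complex]
  simp [Complex.div_re, Complex.div_im, Complex.normSq_apply, Complex.sub_re, Complex.sub_im,
    Complex.add_re, Complex.add_im, Complex.mul_re, Complex.mul_im, Complex.I_re, Complex.I_im]
  ring

lemma det_eq_jac (u : ℂ → ℂ) (z : ℂ) : (fderiv ℝ u z).det = jac u z := by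
  rw [det_formula]; rfl

/-- Wirtinger chain rule. -/
lemma wdz_comp {u f : ℂ → ℂ} {z : ℂ} (hu : DifferentiableAt ℝ u (f z))
    (hf : DifferentiableAt ℝ f z) :
    wdz (u ∘ f) z = wdz u (f z) * wdz f z + wdzbar u (f z) * (starRingEnd ℂ) (wdzbar f z)
    ∧ wdzbar (u ∘ f) z
      = wdz u (f z) * wdzbar f z + wdzbar u (f z) * (starRingEnd ℂ) (wdz f z) := by
  have hcomp : fderiv ℝ (u ∘ f) z = (fderiv ℝ u (f z)).comp (fderiv ℝ f z) :=
    fderiv_comp z hu hf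
  set a := wdz u (f z); set b := wdzbar u (f z); set p := wdz f z; set q := wdzbar f z
  have f1 : fderiv ℝ f z 1 = p + q := by simpa using fderiv_eval f z 1
  have fI : fderiv ℝ f z Complex.I = (p - q) * Complex.I := by
    rw [fderiv_eval f z Complex.I]; simp [Complex.conj_I]; ring
  have e1 : fderiv ℝ (u ∘ f) z 1 = a * (p + q) + b * (starRingEnd ℂ) (p + q) := by
    rw [hcomp]; show fderiv ℝ u (f z) (fderiv ℝ f z 1) = _
    rw [f1, fderiv_eval]
  have eI : fderiv ℝ (u ∘ f) z Complex.I
      = a * ((p - q) * Complex.I) + b * (starRingEnd ℂ) ((p - q) * Complex.I) := by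
    rw [hcomp]; show fderiv ℝ u (f z) (fderiv ℝ f z Complex.I) = _
    rw [fI, fderiv_eval]
  constructor <;>
  · simp only [wdz, wdzbar, e1, eI, map_add, map_sub, map_mul, Complex.conj_I]
    ring_nf
    simp only [Complex.I_sq]
    ring

/-- Multiplicativity of the algebraic Jacobian expression. -/
lemma jac_alg (a b p q : ℂ) :
    ‖a * p + b * (starRingEnd ℂ) q‖ ^ 2 - ‖a * q + b * (starRingEnd ℂ) p‖ ^ 2
      = (‖a‖ ^ 2 - ‖b‖ ^ 2) * (‖p‖ ^ 2 - ‖q‖ ^ 2) := by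
  simp only [norm_sq_complex, Complex.add_re, Complex.add_im, Complex.mul_re, Complex.mul_im,
    Complex.conj_re, Complex.conj_im]
  ring

/-- The core pointwise identity, in purely algebraic form. -/
lemma key_identity (a b p q : ℂ) (hJ : ‖p‖ ^ 2 - ‖q‖ ^ 2 ≠ 0) :
    (‖p - (if (a*p + b*(starRingEnd ℂ) q) * (starRingEnd ℂ) (a*q + b*(starRingEnd ℂ) p) = 0
        then 0
        else (a*p + b*(starRingEnd ℂ) q) * (starRingEnd ℂ) (a*q + b*(starRingEnd ℂ) p)
          / (‖(a*p + b*(starRingEnd ℂ) q) * (starRingEnd ℂ) (a*q + b*(starRingEnd ℂ) p)‖ : ℂ))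
      * q‖ ^ 2 / (‖p‖ ^ 2 - ‖q‖ ^ 2) - 1)
      * ‖(a*p + b*(starRingEnd ℂ) q) * (a*q + b*(starRingEnd ℂ) p)‖
    + (‖a*p + b*(starRingEnd ℂ) q‖ - ‖a*q + b*(starRingEnd ℂ) p‖) ^ 2 * ‖q‖ ^ 2
        / (‖p‖ ^ 2 - ‖q‖ ^ 2)
    = ((‖a‖ ^ 2 + ‖b‖ ^ 2) * (‖p‖ ^ 2 - ‖q‖ ^ 2)
        - (‖a*p + b*(starRingEnd ℂ) q‖ ^ 2 + ‖a*q + b*(starRingEnd ℂ) p‖ ^ 2)) / 2 := by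
  set P := a*p + b*(starRingEnd ℂ) q with hP
  set Q := a*q + b*(starRingEnd ℂ) p with hQ
  set J := ‖p‖ ^ 2 - ‖q‖ ^ 2 with hJdef
  set X := (p * (starRingEnd ℂ) q * (starRingEnd ℂ) P * Q).re with hX
  have step1 : (‖p - (if P * (starRingEnd ℂ) Q = 0 then 0
        else P * (starRingEnd ℂ) Q / (‖P * (starRingEnd ℂ) Q‖ : ℂ)) * q‖ ^ 2 / J - 1) * ‖P * Q‖
      = (2 * ‖q‖ ^ 2 * (‖P‖ * ‖Q‖) - 2 * X) / J := by
    by_cases hz : P * (starRingEnd ℂ) Q = 0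
    · have h0 : P = 0 ∨ Q = 0 := by
        rcases mul_eq_zero.1 hz with h | h
        · exact Or.inl h
        · exact Or.inr (by simpa using h)
      have h1 : ‖P * Q‖ = 0 := by rcases h0 with h | h <;> simp [h]
      have h2 : ‖P‖ * ‖Q‖ = 0 := by rcases h0 with h | h <;> simp [h]
      have h3 : X = 0 := by rcases h0 with h | h <;> simp [hX, h]
      rw [if_pos hz, h1, h2, h3]
      simp
    · rw [if_neg hz]
      have hr : ‖P * (starRingEnd ℂ) Q‖ = ‖P‖ * ‖Q‖ := by
        rw [norm_mul]; simp
      have hrpos : (0:ℝ) < ‖P‖ * ‖Q‖ := by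
        rw [← hr]; exact norm_pos_iff.2 hz
      have hPQ : ‖P * Q‖ = ‖P‖ * ‖Q‖ := norm_mul P Q
      have hgq : ‖p - P * (starRingEnd ℂ) Q / (‖P * (starRingEnd ℂ) Q‖ : ℂ) * q‖ ^ 2
          = ‖p‖ ^ 2 + ‖q‖ ^ 2 - 2 * (X / (‖P‖ * ‖Q‖)) := by
        have hnormγ : ‖P * (starRingEnd ℂ) Q / (‖P * (starRingEnd ℂ) Q‖ : ℂ)‖ = 1 := by
          rw [norm_div, Complex.norm_real, norm_norm, div_self (norm_pos_iff.2 hz).ne']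
        have expand : ∀ x y : ℂ, ‖x - y‖ ^ 2 = ‖x‖ ^ 2 + ‖y‖ ^ 2 - 2 * (x * (starRingEnd ℂ) y).re := by
          intro x y
          simp only [norm_sq_complex, Complex.sub_re, Complex.sub_im, Complex.mul_re,
            Complex.conj_re, Complex.conj_im]
          ring
        rw [expand]
        have h1 : ‖P * (starRingEnd ℂ) Q / (‖P * (starRingEnd ℂ) Q‖ : ℂ) * q‖ ^ 2 = ‖q‖ ^ 2 := by
          rw [norm_mul, hnormγ, one_mul]
        rw [h1]
        congr 1
        have : p * (starRingEnd ℂ) (P * (starRingEnd ℂ) Q / (‖P * (starRingEnd ℂ) Q‖ : ℂ) * q)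
            = (p * (starRingEnd ℂ) q * (starRingEnd ℂ) P * Q) / ((‖P‖ * ‖Q‖ : ℝ) : ℂ) := by
          rw [map_mul, map_div₀, map_mul]
          simp only [Complex.conj_conj, Complex.conj_ofReal]
          rw [hr]
          ring
        rw [this, Complex.div_ofReal_re]
      rw [hgq, hPQ]
      have hre : ‖p‖ ^ 2 + ‖q‖ ^ 2 = J + 2 * ‖q‖ ^ 2 := by rw [hJdef]; ring
      rw [hre]
      have gen : ∀ nq2 r X : ℝ, 0 < r →
          ((J + 2 * nq2 - 2 * (X / r)) / J - 1) * r = (2 * nq2 * r - 2 * X) / J := by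
        intro nq2 r X hr
        field_simp
        ring
      exact gen (‖q‖ ^ 2) (‖P‖ * ‖Q‖) X hrpos
  rw [step1]
  have step2 : (2 * ‖q‖ ^ 2 * (‖P‖ * ‖Q‖) - 2 * X) / J + (‖P‖ - ‖Q‖) ^ 2 * ‖q‖ ^ 2 / J
      = (‖q‖ ^ 2 * (‖P‖ ^ 2 + ‖Q‖ ^ 2) - 2 * X) / J := by
    rw [← add_div]
    congr 1
    ring
  rw [step2, div_eq_iff hJ]
  have : ‖q‖ ^ 2 * (‖P‖ ^ 2 + ‖Q‖ ^ 2) - 2 * X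
      = ((‖a‖ ^ 2 + ‖b‖ ^ 2) * J - (‖P‖ ^ 2 + ‖Q‖ ^ 2)) / 2 * J := by
    simp only [hX, hP, hQ, hJdef, norm_sq_complex, Complex.add_re, Complex.add_im,
      Complex.mul_re, Complex.mul_im, Complex.conj_re, Complex.conj_im]
    ring
  linarith [this]

/-- The bound t2 ≤ 2 * pullback density. -/
lemma key_bound (a b p q : ℂ) (hJ : 0 < ‖p‖ ^ 2 - ‖q‖ ^ 2)
    (hab : 0 < ‖a‖ ^ 2 - ‖b‖ ^ 2) :
    (‖a*p + b*(starRingEnd ℂ) q‖ - ‖a*q + b*(starRingEnd ℂ) p‖) ^ 2 * ‖q‖ ^ 2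
        / (‖p‖ ^ 2 - ‖q‖ ^ 2)
      ≤ 2 * ((‖a‖ ^ 2 + ‖b‖ ^ 2) * (‖p‖ ^ 2 - ‖q‖ ^ 2)) := by
  set P := a*p + b*(starRingEnd ℂ) q with hP
  set Q := a*q + b*(starRingEnd ℂ) p with hQ
  set J := ‖p‖ ^ 2 - ‖q‖ ^ 2 with hJdef
  set c := ‖a‖ ^ 2 - ‖b‖ ^ 2 with hc
  clear_value P Q J c
  have hPQ : ‖P‖ ^ 2 - ‖Q‖ ^ 2 = c * J := by
    rw [hP, hQ, hJdef, hc]; exact jac_alg a b p q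
  have hkey : ((c : ℝ) : ℂ) * q = (starRingEnd ℂ) a * Q - b * (starRingEnd ℂ) P := by
    have h1 : ((‖a‖ ^ 2 : ℝ) : ℂ) = a * (starRingEnd ℂ) a := by
      rw [Complex.mul_conj, ← Complex.sq_norm]
    have h2 : ((‖b‖ ^ 2 : ℝ) : ℂ) = b * (starRingEnd ℂ) b := by
      rw [Complex.mul_conj, ← Complex.sq_norm]
    rw [hQ, hP, hc]
    rw [hc] at hab
    push_cast [h1, h2]
    simp only [map_add, map_mul, Complex.conj_conj]
    ring
  have hq : c * ‖q‖ ≤ ‖a‖ * ‖Q‖ + ‖b‖ * ‖P‖ := by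
    calc c * ‖q‖ = ‖((c : ℝ) : ℂ) * q‖ := by
          rw [norm_mul, Complex.norm_real, Real.norm_eq_abs, abs_of_pos hab]
      _ = ‖(starRingEnd ℂ) a * Q - b * (starRingEnd ℂ) P‖ := by rw [hkey]
      _ ≤ ‖(starRingEnd ℂ) a * Q‖ + ‖b * (starRingEnd ℂ) P‖ := norm_sub_le _ _
      _ = ‖a‖ * ‖Q‖ + ‖b‖ * ‖P‖ := by simp [norm_mul]
  have hPpos : 0 < ‖P‖ := by
    nlinarith [norm_nonneg Q, norm_nonneg P, mul_pos hab hJ]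
  have hs : (0:ℝ) < (‖P‖ + ‖Q‖) ^ 2 := by positivity
  rw [div_le_iff₀ hJ, ← mul_le_mul_iff_of_pos_right hs]
  have e1 : (‖P‖ - ‖Q‖) * (‖P‖ + ‖Q‖) = c * J := by nlinarith [hPQ]
  have A1 : (‖P‖ - ‖Q‖) ^ 2 * ‖q‖ ^ 2 * (‖P‖ + ‖Q‖) ^ 2 = (c * ‖q‖) ^ 2 * J ^ 2 := by
    have e1sq : ((‖P‖ - ‖Q‖) * (‖P‖ + ‖Q‖)) ^ 2 = (c * J) ^ 2 := by rw [e1]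
    nlinarith [e1sq]
  have A2 : (c * ‖q‖) ^ 2 ≤ (‖a‖ * ‖Q‖ + ‖b‖ * ‖P‖) ^ 2 := by
    have h0 : (0:ℝ) ≤ c * ‖q‖ := mul_nonneg hab.le (norm_nonneg q)
    nlinarith [hq, h0]
  have h2 : (‖a‖ * ‖Q‖ + ‖b‖ * ‖P‖) ^ 2 ≤ 2 * (‖a‖ ^ 2 + ‖b‖ ^ 2) * (‖P‖ ^ 2 + ‖Q‖ ^ 2) := by
    nlinarith [sq_nonneg (‖a‖ * ‖Q‖ - ‖b‖ * ‖P‖), sq_nonneg (‖a‖ * ‖P‖), sq_nonneg (‖b‖ * ‖Q‖)]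
  have A3 : ‖P‖ ^ 2 + ‖Q‖ ^ 2 ≤ (‖P‖ + ‖Q‖) ^ 2 := by
    nlinarith [mul_nonneg (norm_nonneg P) (norm_nonneg Q)]
  have B1 : (c * ‖q‖) ^ 2 * J ^ 2 ≤ (‖a‖ * ‖Q‖ + ‖b‖ * ‖P‖) ^ 2 * J ^ 2 :=
    mul_le_mul_of_nonneg_right A2 (sq_nonneg J)
  have B2 : (‖a‖ * ‖Q‖ + ‖b‖ * ‖P‖) ^ 2 * J ^ 2
      ≤ 2 * (‖a‖ ^ 2 + ‖b‖ ^ 2) * (‖P‖ ^ 2 + ‖Q‖ ^ 2) * J ^ 2 :=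
    mul_le_mul_of_nonneg_right h2 (sq_nonneg J)
  have B3 : 2 * (‖a‖ ^ 2 + ‖b‖ ^ 2) * (‖P‖ ^ 2 + ‖Q‖ ^ 2) * J ^ 2
      ≤ 2 * (‖a‖ ^ 2 + ‖b‖ ^ 2) * (‖P‖ + ‖Q‖) ^ 2 * J ^ 2 := by
    have h0 : (0:ℝ) ≤ 2 * (‖a‖ ^ 2 + ‖b‖ ^ 2) * J ^ 2 := by positivity
    linarith [mul_le_mul_of_nonneg_left A3 h0]
  linarith [A1, B1, B2, B3]

/-- Differentiability of the global inverse at points of the image. -/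
lemma inv_diff {X : Set ℂ} (hX : IsOpen X) {H Hinv : ℂ → ℂ}
    (hHd : ContDiff ℝ (⊤ : ℕ∞) H) (hinvl : Set.LeftInvOn Hinv H X)
    {x : ℂ} (hx : x ∈ X) (hdet : (fderiv ℝ H x).det ≠ 0) :
    DifferentiableAt ℝ Hinv (H x) := by
  have hsd : HasStrictFDerivAt H (fderiv ℝ H x) x :=
    (hHd.contDiffAt).hasStrictFDerivAt (by simp)
  let E : ℂ ≃L[ℝ] ℂ :=
    ((fderiv ℝ H x).toLinearMap.equivOfDetNeZero hdet).toContinuousLinearEquiv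
  have hcoe : (E : ℂ →L[ℝ] ℂ) = fderiv ℝ H x := by
    ext v
    rfl
  have hs : HasStrictFDerivAt H (E : ℂ →L[ℝ] ℂ) x := by rw [hcoe]; exact hsd
  set g := hs.localInverse H E x with hg
  have h1 : ∀ᶠ y in 𝓝 (H x), H (g y) = y := hs.eventually_right_inverse
  have h2 : ∀ᶠ y in 𝓝 (H x), g y ∈ X := by
    have hgx : g (H x) = x := hs.localInverse_apply_image
    exact hs.localInverse_continuousAt.preimage_mem_nhds
      (hX.mem_nhds (by rw [← hg, hgx]; exact hx))
  have heq : Hinv =ᶠ[𝓝 (H x)] g := by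
    filter_upwards [h1, h2] with y hy1 hy2
    calc Hinv y = Hinv (H (g y)) := by rw [hy1]
      _ = g y := hinvl hy2
  exact ((hs.to_localInverse.hasFDerivAt).congr_of_eventuallyEq heq).differentiableAt

lemma measurable_wdz (u : ℂ → ℂ) : Measurable (wdz u) := by
  exact ((measurable_fderiv_apply_const ℝ u 1).sub
    ((measurable_fderiv_apply_const ℝ u Complex.I).const_mul Complex.I)).div_const 2

lemma measurable_wdzbar (u : ℂ → ℂ) : Measurable (wdzbar u) := by
  exact ((measurable_fderiv_apply_const ℝ u 1).add
    ((measurable_fderiv_apply_const ℝ u Complex.I).const_mul Complex.I)).div_const 2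

/-- The integral identity for the energy difference of two diffeomorphisms onto Y. -/
theorem stmt7 (G X Y : Set ℂ) (hG : IsOpen G) (hX : IsOpen X) (hY : IsOpen Y)
    (hGb : Bornology.IsBounded G) (hXb : Bornology.IsBounded X)
    (hYb : Bornology.IsBounded Y)
    (h H Hinv : ℂ → ℂ)
    (hhd : ContDiff ℝ (⊤ : ℕ∞) h) (hHd : ContDiff ℝ (⊤ : ℕ∞) H)
    (hhbij : Set.BijOn h G Y) (hHbij : Set.BijOn H X Y)
    (hhJ : ∀ z ∈ G, 0 < jac h z) (hHJ : ∀ z ∈ X, 0 < jac H z)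
    (hhE : IntegrableOn (fun z => ‖wdz h z‖ ^ 2 + ‖wdzbar h z‖ ^ 2) G)
    (hHE : IntegrableOn (fun z => ‖wdz H z‖ ^ 2 + ‖wdzbar H z‖ ^ 2) X)
    (hinv : Set.InvOn Hinv H X Y)
    (f : ℂ → ℂ) (hf : ∀ z ∈ G, f z = Hinv (h z)) :
    energy X H - energy G h
      = 4 * (∫ z in G,
          (‖wdz f z - gammaFn h z * wdzbar f z‖ ^ 2
              / (‖wdz f z‖ ^ 2 - ‖wdzbar f z‖ ^ 2) - 1)
            * ‖wdz h z * wdzbar h z‖)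
      + 4 * (∫ z in G,
          (‖wdz h z‖ - ‖wdzbar h z‖) ^ 2 * ‖wdzbar f z‖ ^ 2
            / (‖wdz f z‖ ^ 2 - ‖wdzbar f z‖ ^ 2)) := by
  -- basic facts
  have hYm : ∀ z ∈ G, h z ∈ Y := fun z hz => hhbij.mapsTo hz
  have hXmem : ∀ z ∈ G, f z ∈ X := by
    intro z hz
    obtain ⟨x, hxX, hxH⟩ := hHbij.surjOn (hYm z hz)
    rw [hf z hz, ← hxH, hinv.1 hxX]; exact hxX
  have hHf : ∀ z ∈ G, H (f z) = h z := fun z hz => by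
    rw [hf z hz]; exact hinv.2 (hYm z hz)
  have hdet_ne : ∀ x ∈ X, (fderiv ℝ H x).det ≠ 0 := fun x hx => by
    rw [det_eq_jac]; exact (hHJ x hx).ne'
  have hfdiff : ∀ z ∈ G, DifferentiableAt ℝ f z := by
    intro z hz
    have hdy : DifferentiableAt ℝ Hinv (h z) := by
      obtain ⟨x, hxX, hxH⟩ := hHbij.surjOn (hYm z hz)
      rw [← hxH]; exact inv_diff hX hHd hinv.1 hxX (hdet_ne x hxX)
    have hco : DifferentiableAt ℝ (Hinv ∘ h) z :=
      hdy.comp z ((hhd.differentiable (by simp)) z)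
    have hfe : f =ᶠ[nhds z] (Hinv ∘ h) :=
      eventually_of_mem (hG.mem_nhds hz) (fun w hw => hf w hw)
    exact hco.congr_of_eventuallyEq hfe
  -- chain rule
  have hch : ∀ z ∈ G,
      wdz h z = wdz H (f z) * wdz f z + wdzbar H (f z) * (starRingEnd ℂ) (wdzbar f z)
      ∧ wdzbar h z = wdz H (f z) * wdzbar f z + wdzbar H (f z) * (starRingEnd ℂ) (wdz f z) := by
    intro z hz
    have hcomp_eq : h =ᶠ[nhds z] (H ∘ f) :=
      eventually_of_mem (hG.mem_nhds hz) (fun w hw => (hHf w hw).symm)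
    have hfd : fderiv ℝ h z = fderiv ℝ (H ∘ f) z := hcomp_eq.fderiv_eq
    have hw1 : wdz h z = wdz (H ∘ f) z := by unfold wdz; rw [hfd]
    have hw2 : wdzbar h z = wdzbar (H ∘ f) z := by unfold wdzbar; rw [hfd]
    have hpair := wdz_comp ((hHd.differentiable (by simp)) (f z)) (hfdiff z hz)
    exact ⟨hw1.trans hpair.1, hw2.trans hpair.2⟩
  have hjacmul : ∀ z ∈ G, jac h z = jac H (f z) * jac f z := by
    intro z hz
    obtain ⟨e1, e2⟩ := hch z hz
    unfold jac
    rw [e1, e2]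
    exact jac_alg _ _ _ _
  have hjacf : ∀ z ∈ G, 0 < jac f z := by
    intro z hz
    have h1 := hhJ z hz
    have h2 := hHJ (f z) (hXmem z hz)
    have h3 := hjacmul z hz
    nlinarith
  -- injectivity and image
  have hinjf : Set.InjOn f G := by
    intro z1 h1 z2 h2 heq
    apply hhbij.injOn h1 h2
    have hiv : Hinv (h z1) = Hinv (h z2) := by rw [← hf z1 h1, ← hf z2 h2, heq]
    rw [← hinv.2 (hYm z1 h1), ← hinv.2 (hYm z2 h2), hiv]
  have himg : f '' G = X := by
    apply Set.eq_of_subset_of_subset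
    · rintro _ ⟨z, hz, rfl⟩; exact hXmem z hz
    · intro x hx
      obtain ⟨z, hz, hzx⟩ := hhbij.surjOn (hHbij.mapsTo hx)
      exact ⟨z, hz, by rw [hf z hz, hzx, hinv.1 hx]⟩
  -- change of variables
  have hfderivW : ∀ z ∈ G, HasFDerivWithinAt f (fderiv ℝ f z) G z := fun z hz =>
    ((hfdiff z hz).hasFDerivAt).hasFDerivWithinAt
  have hcov := integral_image_eq_integral_abs_det_fderiv_smul volume hG.measurableSet
    hfderivW hinjf (fun w => ‖wdz H w‖ ^ 2 + ‖wdzbar H w‖ ^ 2)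
  have hcovi := integrableOn_image_iff_integrableOn_abs_det_fderiv_smul volume hG.measurableSet
    hfderivW hinjf (fun w => ‖wdz H w‖ ^ 2 + ‖wdzbar H w‖ ^ 2)
  rw [himg] at hcov hcovi
  set pull : ℂ → ℝ := fun z => jac f z * (‖wdz H (f z)‖ ^ 2 + ‖wdzbar H (f z)‖ ^ 2) with hpull
  have habs : Set.EqOn (fun z => |(fderiv ℝ f z).det| • (‖wdz H (f z)‖ ^ 2 + ‖wdzbar H (f z)‖ ^ 2))
      pull G := by
    intro z hz
    simp only [hpull, det_eq_jac, abs_of_pos (hjacf z hz), smul_eq_mul]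
  have hpull_int : IntegrableOn pull G :=
    ((hcovi.mp hHE).congr_fun habs hG.measurableSet)
  have hpull_eq : (∫ w in X, (‖wdz H w‖ ^ 2 + ‖wdzbar H w‖ ^ 2)) = ∫ z in G, pull z :=
    hcov.trans (setIntegral_congr_fun hG.measurableSet habs)
  -- the two integrands
  set t1 : ℂ → ℝ := fun z =>
    (‖wdz f z - gammaFn h z * wdzbar f z‖ ^ 2
        / (‖wdz f z‖ ^ 2 - ‖wdzbar f z‖ ^ 2) - 1) * ‖wdz h z * wdzbar h z‖ with ht1
  set t2 : ℂ → ℝ := fun z =>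
    (‖wdz h z‖ - ‖wdzbar h z‖) ^ 2 * ‖wdzbar f z‖ ^ 2
      / (‖wdz f z‖ ^ 2 - ‖wdzbar f z‖ ^ 2) with ht2
  have hJne : ∀ z ∈ G, ‖wdz f z‖ ^ 2 - ‖wdzbar f z‖ ^ 2 ≠ 0 := fun z hz =>
    ne_of_gt (hjacf z hz)
  have hpt : ∀ z ∈ G, t1 z + t2 z
      = (pull z - (‖wdz h z‖ ^ 2 + ‖wdzbar h z‖ ^ 2)) / 2 := by
    intro z hz
    obtain ⟨e1, e2⟩ := hch z hz
    have hid := key_identity (wdz H (f z)) (wdzbar H (f z)) (wdz f z) (wdzbar f z) (hJne z hz)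
    simp only [ht1, ht2, hpull, gammaFn, jac, e1, e2]
    linear_combination hid
  have hbd : ∀ z ∈ G, t2 z ≤ 2 * pull z := by
    intro z hz
    obtain ⟨e1, e2⟩ := hch z hz
    have habj : 0 < ‖wdz H (f z)‖ ^ 2 - ‖wdzbar H (f z)‖ ^ 2 := hHJ (f z) (hXmem z hz)
    have hJp : 0 < ‖wdz f z‖ ^ 2 - ‖wdzbar f z‖ ^ 2 := hjacf z hz
    have hkb := key_bound (wdz H (f z)) (wdzbar H (f z)) (wdz f z) (wdzbar f z) hJp habj
    simp only [ht2, hpull, jac, e1, e2]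
    linarith [hkb]
  have ht2nn : ∀ z ∈ G, 0 ≤ t2 z := by
    intro z hz
    apply div_nonneg (by positivity) (le_of_lt (hjacf z hz))
  -- measurability
  have hmeas_t2 : Measurable t2 := by
    apply Measurable.div
    · exact ((((measurable_wdz h).norm.sub (measurable_wdzbar h).norm).pow_const 2).mul
        (((measurable_wdzbar f).norm).pow_const 2))
    · exact ((measurable_wdz f).norm.pow_const 2).sub ((measurable_wdzbar f).norm.pow_const 2)
  -- integrability of t2 and t1
  have ht2_int : IntegrableOn t2 G := by
    apply Integrable.mono' (hpull_int.const_mul 2) hmeas_t2.aestronglyMeasurable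
    filter_upwards [ae_restrict_mem hG.measurableSet] with z hz
    rw [Real.norm_eq_abs, _root_.abs_of_nonneg (ht2nn z hz)]
    exact hbd z hz
  have ht1_int : IntegrableOn t1 G := by
    have haux : IntegrableOn
        (fun z => (pull z - (‖wdz h z‖ ^ 2 + ‖wdzbar h z‖ ^ 2)) / 2 - t2 z) G :=
      ((hpull_int.sub hhE).div_const 2).sub ht2_int
    apply haux.congr_fun _ hG.measurableSet
    intro z hz
    have := hpt z hz
    linarith
  -- put it all together
  unfold energy
  rw [hpull_eq]
  have hsplit : (∫ z in G, pull z) - ∫ z in G, (‖wdz h z‖ ^ 2 + ‖wdzbar h z‖ ^ 2)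
      = ∫ z in G, (pull z - (‖wdz h z‖ ^ 2 + ‖wdzbar h z‖ ^ 2)) :=
    (integral_sub hpull_int hhE).symm
  have hcongr : (∫ z in G, (pull z - (‖wdz h z‖ ^ 2 + ‖wdzbar h z‖ ^ 2)))
      = ∫ z in G, (2 * (t1 z + t2 z)) := by
    apply setIntegral_congr_fun hG.measurableSet
    intro z hz
    have := hpt z hz
    simp only
    linarith
  have hfin : (∫ z in G, (2 * (t1 z + t2 z))) = 2 * ((∫ z in G, t1 z) + ∫ z in G, t2 z) := by
    rw [integral_const_mul, integral_add ht1_int ht2_int]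
  linarith [hsplit, hcongr, hfin]
end

section
/- Fix R > 1 and define on the slit annulus {1 ≤ |z| ≤ R} \ [0, R] the map 𝔥(z) = −(2i/R) Arg z − ((R² − 1)/R) · log( (R − z)(z̄ R − 1)/(z̄ R²) ), with 0 < Arg z < 2π and the continuous branch of log. Then 𝔥 is harmonic, 𝔥_z = (zR − 1)/( z(R − z) ), conj(𝔥_z̄) = (z − R)/( z(zR − 1) ), and the Hopf product equals 𝔥_z · conj(𝔥_z̄) = −1/z². -/
/-!
Off the ray `[0, ∞)` the map `𝔥` is smooth. The branch of `Arg` in `(0, 2π)` is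
`π + Im log (-z)`, and the argument `P z` of the logarithm never meets `(-∞, 0]`: up to the
positive factor `|z|² R²` its imaginary part is `-Im z · (R (1 + |z|²) - 2 Re z)`, and it is
positive on the negative real axis. Differentiating `log ∘ P` by the chain rule, with no
branch chosen for the logarithms of the factors of `P`, gives
`𝔥_z = -1/(R z) + (R² - 1)/(R (R - z))` and `𝔥_z̄ = 1/(R z̄) - (R² - 1)/(R z̄ (z̄ R - 1))`.
The first is holomorphic, hence `𝔥_zz̄ = 0`, and the Hopf product is a rational identity.
-/

open Complex MeasureTheory Real Filter
open scoped Classical Topology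

open ComplexConjugate

noncomputable def wirtingerCLM (a b : ℂ) : ℂ →L[ℝ] ℂ :=
  a • ContinuousLinearMap.id ℝ ℂ + b • (conjCLE : ℂ →L[ℝ] ℂ)

@[simp]
lemma wirtingerCLM_apply (a b h : ℂ) : wirtingerCLM a b h = a * h + b * conj h := by
  simp [wirtingerCLM]

/-- Every `ℝ`-linear map `ℂ → ℂ` is `wirtingerCLM a b` for unique `a, b`, so this is real
differentiability with the derivative recorded in Wirtinger coordinates `(∂f/∂z, ∂f/∂z̄)`. -/
def HasWirtingerDerivAt (f : ℂ → ℂ) (a b z : ℂ) : Prop :=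
  HasFDerivAt f (wirtingerCLM a b) z

namespace HasWirtingerDerivAt

variable {f g : ℂ → ℂ} {a b a' b' z : ℂ}

lemma of_hasFDerivAt {L : ℂ →L[ℝ] ℂ} (hf : HasFDerivAt f L z)
    (hL : ∀ h, L h = a * h + b * conj h) : HasWirtingerDerivAt f a b z := by
  unfold HasWirtingerDerivAt
  convert hf using 1
  ext1 h
  simp [hL]

lemma wdz_eq (h : HasWirtingerDerivAt f a b z) : wdz f z = a := by
  rw [wdz, h.fderiv]
  simp only [wirtingerCLM_apply, map_one, conj_I]
  linear_combination ((b - a) / 2) * I_sq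

lemma wdzbar_eq (h : HasWirtingerDerivAt f a b z) : wdzbar f z = b := by
  rw [wdzbar, h.fderiv]
  simp only [wirtingerCLM_apply, map_one, conj_I]
  linear_combination ((a - b) / 2) * I_sq

lemma congr_of_eventuallyEq (h : HasWirtingerDerivAt f a b z) (hfg : g =ᶠ[𝓝 z] f) :
    HasWirtingerDerivAt g a b z :=
  HasFDerivAt.congr_of_eventuallyEq h hfg

lemma add_const (hf : HasWirtingerDerivAt f a b z) (c : ℂ) :
    HasWirtingerDerivAt (fun w => f w + c) a b z :=
  (hasFDerivAt_add_const_iff c).2 hf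

lemma sub (hf : HasWirtingerDerivAt f a b z) (hg : HasWirtingerDerivAt g a' b' z) :
    HasWirtingerDerivAt (fun w => f w - g w) (a - a') (b - b') z :=
  of_hasFDerivAt (HasFDerivAt.fun_sub hf hg) fun h => by simp; ring

lemma mul (hf : HasWirtingerDerivAt f a b z) (hg : HasWirtingerDerivAt g a' b' z) :
    HasWirtingerDerivAt (fun w => f w * g w) (f z * a' + g z * a) (f z * b' + g z * b) z :=
  of_hasFDerivAt (HasFDerivAt.fun_mul hf hg) fun h => by simp; ring

lemma const_mul (hf : HasWirtingerDerivAt f a b z) (c : ℂ) :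
    HasWirtingerDerivAt (fun w => c * f w) (c * a) (c * b) z :=
  of_hasFDerivAt ((hasFDerivAt_const c z).fun_mul hf) fun h => by simp; ring

lemma star (hf : HasWirtingerDerivAt f a b z) :
    HasWirtingerDerivAt (fun w => conj (f w)) (conj b) (conj a) z :=
  of_hasFDerivAt (HasFDerivAt.star hf) fun h => by simp; ring

end HasWirtingerDerivAt

lemma HasDerivAt.comp_hasWirtingerDerivAt {f g : ℂ → ℂ} {a b c z : ℂ}
    (hg : HasDerivAt g c (f z)) (hf : HasWirtingerDerivAt f a b z) :
    HasWirtingerDerivAt (fun w => g (f w)) (c * a) (c * b) z :=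
  .of_hasFDerivAt (hg.comp_hasFDerivAt z hf) fun h => by simp; ring

lemma HasDerivAt.hasWirtingerDerivAt {f : ℂ → ℂ} {a z : ℂ} (hf : HasDerivAt f a z) :
    HasWirtingerDerivAt f a 0 z :=
  .of_hasFDerivAt (hf.hasFDerivAt.restrictScalars ℝ) fun h => by simp [mul_comm]

lemma hasWirtingerDerivAt_conj (z : ℂ) : HasWirtingerDerivAt conj 0 1 z :=
  .of_hasFDerivAt (conjCLE : ℂ →L[ℝ] ℂ).hasFDerivAt fun h => by simp

namespace HasWirtingerDerivAt

variable {f g : ℂ → ℂ} {a b a' b' z : ℂ}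

lemma div (hf : HasWirtingerDerivAt f a b z) (hg : HasWirtingerDerivAt g a' b' z)
    (hgz : g z ≠ 0) :
    HasWirtingerDerivAt (fun w => f w / g w)
      ((a * g z - f z * a') / g z ^ 2) ((b * g z - f z * b') / g z ^ 2) z := by
  have := hf.mul ((hasDerivAt_inv hgz).comp_hasWirtingerDerivAt hg)
  simp only [← div_eq_mul_inv] at this
  convert this using 1 <;> field_simp <;> ring

lemma clog (hf : HasWirtingerDerivAt f a b z) (hfz : f z ∈ slitPlane) :
    HasWirtingerDerivAt (fun w => Complex.log (f w)) ((f z)⁻¹ * a) ((f z)⁻¹ * b) z :=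
  HasDerivAt.comp_hasWirtingerDerivAt (f := f) (hasDerivAt_log hfz) hf

end HasWirtingerDerivAt

lemma DifferentiableAt.wdzbar_eq_zero_of_eventuallyEq {f g : ℂ → ℂ} {z : ℂ}
    (hg : DifferentiableAt ℂ g z) (hfg : f =ᶠ[𝓝 z] g) : wdzbar f z = 0 :=
  (hg.hasDerivAt.hasWirtingerDerivAt.congr_of_eventuallyEq hfg).wdzbar_eq

section SlitPlane

variable {z : ℂ}

lemma ofReal_mul_mem_slitPlane {t : ℝ} (ht : 0 < t) {w : ℂ} :
    (t : ℂ) * w ∈ slitPlane ↔ w ∈ slitPlane := by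
  simp [mem_slitPlane_iff, ht, ht.ne']

lemma neg_mem_slitPlane_iff : -z ∈ slitPlane ↔ ¬(z.im = 0 ∧ 0 ≤ z.re) := by
  rw [mem_slitPlane_iff, neg_re, neg_im, neg_pos, neg_ne_zero, not_and_or, not_le]
  tauto

lemma eventually_neg_mem_slitPlane (hz : -z ∈ slitPlane) : ∀ᶠ w in 𝓝 z, -w ∈ slitPlane :=
  continuous_neg.continuousAt.eventually_mem (isOpen_slitPlane.mem_nhds hz)

lemma ne_ofReal_of_neg_mem_slitPlane (hz : -z ∈ slitPlane) {t : ℝ} (ht : 0 ≤ t) :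
    z ≠ t := by
  rintro rfl
  exact (neg_ofReal_mem_slitPlane.1 hz).not_ge ht

lemma ne_zero_of_neg_mem_slitPlane (hz : -z ∈ slitPlane) : z ≠ 0 :=
  neg_ne_zero.1 (slitPlane_ne_zero hz)

lemma ofReal_sub_ne_zero_of_neg_mem_slitPlane (hz : -z ∈ slitPlane) {t : ℝ} (ht : 0 ≤ t) :
    (t : ℂ) - z ≠ 0 :=
  sub_ne_zero.2 (ne_ofReal_of_neg_mem_slitPlane hz ht).symm

lemma mul_ofReal_sub_one_ne_zero_of_neg_mem_slitPlane (hz : -z ∈ slitPlane) {t : ℝ}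
    (ht : 0 < t) : z * t - 1 ≠ 0 := by
  intro h
  apply ne_ofReal_of_neg_mem_slitPlane hz (inv_nonneg.2 ht.le)
  have ht0 : (t : ℂ) ≠ 0 := by exact_mod_cast ht.ne'
  push_cast
  field_simp
  linear_combination h

end SlitPlane

noncomputable def argTwoPi (z : ℂ) : ℝ := if 0 < arg z then arg z else arg z + 2 * π

lemma argTwoPi_eq_arg_neg_add_pi {z : ℂ} (hz : -z ∈ slitPlane) :
    argTwoPi z = arg (-z) + π := by
  rw [argTwoPi]
  rcases lt_or_ge z.im 0 with him | him
  · rw [if_neg (arg_neg_iff.2 him).not_gt, arg_neg_eq_arg_add_pi_of_im_neg him]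
    ring
  · have hslit : 0 < z.im ∨ z.im = 0 ∧ z.re < 0 := by
      rcases mem_slitPlane_iff.1 hz with h | h
      · rcases him.lt_or_eq with h' | h'
        · exact .inl h'
        · exact .inr ⟨h'.symm, by simpa using h⟩
      · exact .inl (him.lt_of_ne (by simpa [eq_comm] using h))
    rw [if_pos (by linarith [neg_pi_lt_arg (-z), arg_neg_eq_arg_sub_pi_iff.2 hslit]),
      arg_neg_eq_arg_sub_pi_iff.2 hslit]
    ring

lemma hasWirtingerDerivAt_arg_neg {z : ℂ} (hz : -z ∈ slitPlane) :
    HasWirtingerDerivAt (fun w => (arg (-w) : ℂ))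
      (2 * I * z)⁻¹ (-(2 * I * conj z)⁻¹) z := by
  have hlog : HasDerivAt (fun w => Complex.log (-w)) z⁻¹ z := by
    simpa [Function.comp_def] using (hasDerivAt_log hz).comp z (hasDerivAt_neg z)
  have h := (hlog.hasWirtingerDerivAt.sub hlog.hasWirtingerDerivAt.star).const_mul (2 * I)⁻¹
  convert h using 1
  · funext w
    rw [← log_im, im_eq_sub_conj, div_eq_inv_mul]
  all_goals simp only [map_zero, map_inv₀, sub_zero, zero_sub, mul_inv, mul_neg]

section Dual

variable {R : ℝ} {z : ℂ}

noncomputable def dualLogArg (R : ℝ) (z : ℂ) : ℂ :=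
  ((R : ℂ) - z) * (conj z * R - 1) / (conj z * R ^ 2)

noncomputable def dualHarmonic (R : ℝ) (z : ℂ) : ℂ :=
  -(2 * I / R) * (argTwoPi z : ℂ) - (((R : ℂ) ^ 2 - 1) / R) * Complex.log (dualLogArg R z)

lemma dualLogArg_mem_slitPlane (hR : 1 < R) (hz : -z ∈ slitPlane) :
    dualLogArg R z ∈ slitPlane := by
  have hz0 := ne_zero_of_neg_mem_slitPlane hz
  have hR0 : (R : ℂ) ≠ 0 := by exact_mod_cast (zero_lt_one.trans hR).ne'
  have hscale : dualLogArg R z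
      = ((normSq z * R ^ 2)⁻¹ : ℝ) * (z * (R - z) * (conj z * R - 1)) := by
    have hconj : conj z ≠ 0 := by simpa using hz0
    push_cast
    rw [dualLogArg, ← mul_conj]
    field_simp
  rw [hscale, ofReal_mul_mem_slitPlane (by have := normSq_pos.2 hz0; positivity),
    mem_slitPlane_iff]
  obtain ⟨x, y⟩ := z
  simp only [mem_slitPlane_iff, neg_re, neg_im] at hz
  simp only [mul_re, mul_im, sub_re, sub_im, ofReal_re, ofReal_im, conj_re, conj_im, one_re,
    one_im]
  rcases eq_or_ne y 0 with rfl | hy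
  · left
    have hx : x < 0 := by simpa using hz
    have : 0 < (-x) * (R - x) * (1 - x * R) :=
      mul_pos (mul_pos (by linarith) (by linarith)) (by nlinarith)
    nlinarith
  · right
    have : 0 < R * (1 + x ^ 2 + y ^ 2) - 2 * x := by
      nlinarith [sq_nonneg (x - 1), sq_nonneg y]
    have : -y * (R * (1 + x ^ 2 + y ^ 2) - 2 * x) ≠ 0 := mul_ne_zero (neg_ne_zero.2 hy) this.ne'
    convert this using 1
    ring

lemma hasWirtingerDerivAt_log_dualLogArg (hR : 1 < R) (hz : -z ∈ slitPlane) :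
    HasWirtingerDerivAt (fun w => Complex.log (dualLogArg R w))
      (z - R)⁻¹ (conj z * (conj z * R - 1))⁻¹ z := by
  have hR0 : (R : ℂ) ≠ 0 := by exact_mod_cast (zero_lt_one.trans hR).ne'
  have hz0 : conj z ≠ 0 := by simpa using ne_zero_of_neg_mem_slitPlane hz
  have hzR : z - R ≠ 0 := sub_ne_zero.2 (ne_ofReal_of_neg_mem_slitPlane hz (by linarith))
  have hRz := ofReal_sub_ne_zero_of_neg_mem_slitPlane hz (by linarith)
  have hzR' : conj z * R - 1 ≠ 0 := by
    simpa using (map_ne_zero (starRingEnd ℂ)).2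
      (mul_ofReal_sub_one_ne_zero_of_neg_mem_slitPlane hz (by linarith))
  have hu : HasWirtingerDerivAt (fun w => (R : ℂ) - w) (-1) 0 z :=
    ((hasDerivAt_id z).const_sub _).hasWirtingerDerivAt
  have hv : HasWirtingerDerivAt (fun w => conj w * R - 1) 0 R z := by
    simpa using ((hasDerivAt_mul_const (R : ℂ)).sub_const 1).comp_hasWirtingerDerivAt
      (hasWirtingerDerivAt_conj z)
  have hd : HasWirtingerDerivAt (fun w => conj w * R ^ 2) 0 (R ^ 2) z := by
    simpa using (hasDerivAt_mul_const ((R : ℂ) ^ 2)).comp_hasWirtingerDerivAt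
      (hasWirtingerDerivAt_conj z)
  have hP : HasWirtingerDerivAt (dualLogArg R) _ _ z := (hu.mul hv).div hd (by simp [hz0, hR0])
  have h := hP.clog (dualLogArg_mem_slitPlane hR hz)
  simp only [mul_zero, sub_zero, add_zero, zero_add] at h
  rw [dualLogArg] at h
  convert h using 1 <;>
  · rw [inv_div, div_mul_div_comm, eq_div_iff (by simp [*])]
    field_simp
    ring

lemma hasWirtingerDerivAt_dualHarmonic (hR : 1 < R) (hz : -z ∈ slitPlane) :
    HasWirtingerDerivAt (dualHarmonic R) ((z * R - 1) / (z * (R - z)))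
      (conj ((z - R) / (z * (z * R - 1)))) z := by
  have heq : dualHarmonic R =ᶠ[𝓝 z] fun w => -(2 * I / R) * ((arg (-w) : ℂ) + π)
      - (((R : ℂ) ^ 2 - 1) / R) * Complex.log (dualLogArg R w) := by
    filter_upwards [eventually_neg_mem_slitPlane hz] with w hw
    rw [dualHarmonic, argTwoPi_eq_arg_neg_add_pi hw]
    push_cast
    rfl
  have h := (((hasWirtingerDerivAt_arg_neg hz).add_const π).const_mul (-(2 * I / R))).sub
    ((hasWirtingerDerivAt_log_dualLogArg hR hz).const_mul (((R : ℂ) ^ 2 - 1) / R))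
  refine HasWirtingerDerivAt.congr_of_eventuallyEq ?_ heq
  have hR0 : (R : ℂ) ≠ 0 := by exact_mod_cast (zero_lt_one.trans hR).ne'
  have hz0 := ne_zero_of_neg_mem_slitPlane hz
  have hzR : z - R ≠ 0 := sub_ne_zero.2 (ne_ofReal_of_neg_mem_slitPlane hz (by linarith))
  have hRz := ofReal_sub_ne_zero_of_neg_mem_slitPlane hz (by linarith)
  have hzR' := mul_ofReal_sub_one_ne_zero_of_neg_mem_slitPlane hz (by linarith)
  have hc : conj z ≠ 0 := by simpa using hz0
  have hcR : conj z * R - 1 ≠ 0 := by simpa using (map_ne_zero (starRingEnd ℂ)).2 hzR'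
  convert h using 1
  · field_simp
    ring
  · simp only [map_div₀, map_sub, map_mul, conj_ofReal, map_one]
    field_simp
    ring

lemma wdzbar_wdz_dualHarmonic (hR : 1 < R) (hz : -z ∈ slitPlane) :
    wdzbar (wdz (dualHarmonic R)) z = 0 := by
  have hz0 := ne_zero_of_neg_mem_slitPlane hz
  have hRz := ofReal_sub_ne_zero_of_neg_mem_slitPlane hz (by linarith)
  refine DifferentiableAt.wdzbar_eq_zero_of_eventuallyEq
    (g := fun w => (w * R - 1) / (w * (R - w))) (by fun_prop (disch := simp [*])) ?_
  filter_upwards [eventually_neg_mem_slitPlane hz] with w hw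
  exact (hasWirtingerDerivAt_dualHarmonic hR hw).wdz_eq

end Dual

/-- The dual example on the slit annulus: 𝔥(z) = −(2i/R)Arg z − ((R²−1)/R) log((R−z)(z̄R−1)/(z̄R²))
with Arg ∈ (0,2π); harmonicity, derivative formulas and Hopf product −1/z². -/
theorem stmt16 (R : ℝ) (hR : 1 < R)
    (arg2π : ℂ → ℝ)
    (harg : ∀ z : ℂ, arg2π z
      = if 0 < Complex.arg z then Complex.arg z else Complex.arg z + 2 * π)
    (𝔥 : ℂ → ℂ)
    (hdef : ∀ z : ℂ, 𝔥 z
      = -(2 * Complex.I / (R : ℂ)) * ((arg2π z : ℝ) : ℂ)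
        - (((R : ℂ) ^ 2 - 1) / (R : ℂ))
          * Complex.log (((R : ℂ) - z) * ((starRingEnd ℂ z) * (R : ℂ) - 1)
              / ((starRingEnd ℂ z) * (R : ℂ) ^ 2)))
    (S : Set ℂ)
    (hS : S = {z : ℂ | 1 ≤ ‖z‖ ∧ ‖z‖ ≤ R
        ∧ ¬(z.im = 0 ∧ 0 ≤ z.re)}) :
    (∀ z ∈ S, wdzbar (fun w => wdz 𝔥 w) z = 0) ∧
    (∀ z ∈ S,
      wdz 𝔥 z = (z * (R : ℂ) - 1) / (z * ((R : ℂ) - z)) ∧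
      (starRingEnd ℂ) (wdzbar 𝔥 z) = (z - (R : ℂ)) / (z * (z * (R : ℂ) - 1)) ∧
      wdz 𝔥 z * (starRingEnd ℂ) (wdzbar 𝔥 z) = -1 / z ^ 2) := by
  obtain rfl : 𝔥 = dualHarmonic R := funext fun z => by rw [hdef, harg]; rfl
  have hslit : ∀ z ∈ S, -z ∈ slitPlane := fun z hz => by
    rw [hS] at hz
    exact neg_mem_slitPlane_iff.2 hz.2.2
  refine ⟨fun z hz => wdzbar_wdz_dualHarmonic hR (hslit z hz), fun z hz => ?_⟩
  have h := hasWirtingerDerivAt_dualHarmonic hR (hslit z hz)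
  rw [h.wdz_eq, h.wdzbar_eq, conj_conj]
  refine ⟨rfl, rfl, ?_⟩
  have hz0 := ne_zero_of_neg_mem_slitPlane (hslit z hz)
  have hRz := ofReal_sub_ne_zero_of_neg_mem_slitPlane (hslit z hz) (by linarith)
  have hzR' := mul_ofReal_sub_one_ne_zero_of_neg_mem_slitPlane (hslit z hz) (by linarith)
  field_simp
  ring
end

section
/- Let f : Ω → ℂ, suppose f_k : Ω → ℂ is a sequence of harmonic maps on a planar domain Ω, each of which is an injective orientation-preserving map with positive Jacobian, converging locally uniformly to a harmonic map f. Then the derivative sequence (f_k)_z converges locally uniformly to f_z, the functions J(·, f_k) = |(f_k)_z|² − |(f_k)_z̄|² are positive, and either J(·, f) > 0 everywhere on Ω (so f is a local diffeomorphism) or J(·, f) ≡ 0 on Ω. -/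
open Complex MeasureTheory Real Filter
open scoped Classical Topology

/-!
On a disc a harmonic map is `G + conj H` with `G`, `H` holomorphic and `G' = f_z`, so the Cauchy
formula for `G'` gives `r ^ 2 * f_z c` as the circle average of `conj (z - c) * f z` over the
circle of radius `r` about `c`. Hence uniform convergence of `f_k` on circles yields locally
uniform convergence of `(f_k)_z`, and of `(f_k)_z̄ = conj ((conj ∘ f_k)_z)`. As `J(·, f_k) > 0`
forces `(f_k)_z ≠ 0`, Hurwitz's theorem shows that `f_z` vanishes identically (and then so does
`f_z̄`, since `|f_z̄| ≤ |f_z|` in the limit) or nowhere. In the latter case the second complex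
dilatation `conj f_z̄ / f_z` is holomorphic of modulus at most one, so by the maximum modulus
principle its modulus is `< 1` everywhere or `= 1` everywhere.
-/

open ComplexConjugate Metric Set

lemma fderiv_apply_eq_wdz_mul_add_wdzbar_mul_conj (f : ℂ → ℂ) (z v : ℂ) :
    fderiv ℝ f z v = wdz f z * v + wdzbar f z * conj v := by
  have hv : fderiv ℝ f z v = v.re • fderiv ℝ f z 1 + v.im • fderiv ℝ f z I := by
    rw [← map_smul, ← map_smul, ← map_add]
    congr 1
    apply Complex.ext <;> simp
  rw [hv, wdz, wdzbar, real_smul, real_smul]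
  conv_rhs => rw [← re_add_im v]
  simp only [map_add, map_mul, conj_ofReal, conj_I]
  linear_combination (v.im * fderiv ℝ f z I : ℂ) * I_mul_I

lemma hasDerivAt_of_wdzbar_eq_zero {f : ℂ → ℂ} {z : ℂ} (hf : DifferentiableAt ℝ f z)
    (h : wdzbar f z = 0) : HasDerivAt f (wdz f z) z := by
  rw [hasDerivAt_iff_hasFDerivAt]
  refine hasFDerivAt_of_restrictScalars ℝ hf.hasFDerivAt ?_
  ext v
  simp [fderiv_apply_eq_wdz_mul_add_wdzbar_mul_conj, h, mul_comm]

lemma fderiv_conj_comp (f : ℂ → ℂ) (z : ℂ) :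
    fderiv ℝ (fun w => conj (f w)) z = (conjCLE : ℂ →L[ℝ] ℂ).comp (fderiv ℝ f z) :=
  conjCLE.comp_fderiv

lemma wdz_conj_comp (f : ℂ → ℂ) : wdz (fun w => conj (f w)) = fun z => conj (wdzbar f z) := by
  ext z
  simp only [wdz, wdzbar, fderiv_conj_comp, ContinuousLinearMap.comp_apply,
    ContinuousLinearEquiv.coe_coe, conjCLE_apply, map_div₀, map_add, map_mul, conj_I, map_ofNat]
  ring

lemma wdzbar_conj_comp (f : ℂ → ℂ) : wdzbar (fun w => conj (f w)) = fun z => conj (wdz f z) := by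
  ext z
  simp only [wdz, wdzbar, fderiv_conj_comp, ContinuousLinearMap.comp_apply,
    ContinuousLinearEquiv.coe_coe, conjCLE_apply, map_div₀, map_sub, map_mul, conj_I, map_ofNat]
  ring

lemma wdz_wdzbar_eq_wdzbar_wdz {f : ℂ → ℂ} {z : ℂ} (hf : ContDiffAt ℝ 2 f z) :
    wdz (wdzbar f) z = wdzbar (wdz f) z := by
  set S := fderiv ℝ (fderiv ℝ f) z
  have hsymm : S 1 I = S I 1 := hf.isSymmSndFDerivAt (by simp) 1 I
  have hD : HasFDerivAt (fderiv ℝ f) S z :=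
    ((hf.fderiv_right (m := 1) le_rfl).differentiableAt one_ne_zero).hasFDerivAt
  have hA : ∀ u : ℂ, HasFDerivAt (fun w => fderiv ℝ f w u)
      ((ContinuousLinearMap.apply ℝ ℂ u).comp S) z := fun u =>
    (ContinuousLinearMap.apply ℝ ℂ u).hasFDerivAt.comp z hD
  have hdz : fderiv ℝ (fun w => 2⁻¹ * (fderiv ℝ f w 1 - I * fderiv ℝ f w I)) z = _ :=
    (((hA 1).sub ((hA I).const_mul I)).const_mul (2⁻¹ : ℂ)).fderiv
  have hdzbar : fderiv ℝ (fun w => 2⁻¹ * (fderiv ℝ f w 1 + I * fderiv ℝ f w I)) z = _ :=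
    (((hA 1).add ((hA I).const_mul I)).const_mul (2⁻¹ : ℂ)).fderiv
  have hwdz : wdz f = fun w => 2⁻¹ * (fderiv ℝ f w 1 - I * fderiv ℝ f w I) := by
    ext w; rw [wdz]; ring
  have hwdzbar : wdzbar f = fun w => 2⁻¹ * (fderiv ℝ f w 1 + I * fderiv ℝ f w I) := by
    ext w; rw [wdzbar]; ring
  rw [wdz, wdzbar, hwdz, hwdzbar, hdz, hdzbar]
  simp only [smul_apply, sub_apply, add_apply, ContinuousLinearMap.comp_apply,
    ContinuousLinearMap.apply_apply, smul_eq_mul, hsymm]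
  ring

/-- Since `4 ∂²f/∂z∂z̄ = Δf`, this is harmonicity of a `C²` map. -/
structure HarmonicMapOn (f : ℂ → ℂ) (U : Set ℂ) : Prop where
  contDiffOn : ContDiffOn ℝ 2 f U
  wdzbar_wdz : ∀ z ∈ U, wdzbar (wdz f) z = 0

namespace HarmonicMapOn

variable {f : ℂ → ℂ} {U : Set ℂ}

lemma mono (hf : HarmonicMapOn f U) {V : Set ℂ} (hVU : V ⊆ U) : HarmonicMapOn f V :=
  ⟨hf.contDiffOn.mono hVU, fun z hz => hf.wdzbar_wdz z (hVU hz)⟩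

lemma differentiableOn_wdz (hf : HarmonicMapOn f U) (hU : IsOpen U) :
    DifferentiableOn ℂ (wdz f) U := by
  have hD : ContDiffOn ℝ 1 (fderiv ℝ f) U := hf.contDiffOn.fderiv_of_isOpen hU le_rfl
  have hwdz : ContDiffOn ℝ 1 (wdz f) U :=
    ((hD.clm_apply contDiffOn_const).sub
      (contDiffOn_const.mul (hD.clm_apply contDiffOn_const))).div_const 2
  intro z hz
  have hd := (hwdz.contDiffAt (hU.mem_nhds hz)).differentiableAt one_ne_zero
  exact (hasDerivAt_of_wdzbar_eq_zero hd (hf.wdzbar_wdz z hz)).differentiableAt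
    |>.differentiableWithinAt

lemma conj_comp (hf : HarmonicMapOn f U) (hU : IsOpen U) :
    HarmonicMapOn (fun z => conj (f z)) U where
  contDiffOn := (conjCLE : ℂ →L[ℝ] ℂ).contDiff.comp_contDiffOn hf.contDiffOn
  wdzbar_wdz z hz := by
    simp only [wdz_conj_comp, wdzbar_conj_comp]
    rw [wdz_wdzbar_eq_wdzbar_wdz (hf.contDiffOn.contDiffAt (hU.mem_nhds hz)), hf.wdzbar_wdz z hz,
      map_zero]

lemma differentiableOn_conj_wdzbar (hf : HarmonicMapOn f U) (hU : IsOpen U) :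
    DifferentiableOn ℂ (fun z => conj (wdzbar f z)) U := by
  simpa only [wdz_conj_comp] using (hf.conj_comp hU).differentiableOn_wdz hU

end HarmonicMapOn

lemma norm_circleAverage_le {E : Type*} [NormedAddCommGroup E] [NormedSpace ℝ E] {f : ℂ → E}
    {c : ℂ} {R C : ℝ} (h : ∀ z ∈ sphere c |R|, ‖f z‖ ≤ C) : ‖circleAverage f c R‖ ≤ C := by
  have hI := intervalIntegral.norm_integral_le_of_norm_le_const (a := 0) (b := 2 * π)
    (fun θ _ => h (circleMap c R θ) (circleMap_mem_sphere' c R θ))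
  rw [sub_zero, abs_of_pos two_pi_pos] at hI
  rw [circleAverage_def, norm_smul, norm_inv, Real.norm_of_nonneg two_pi_pos.le]
  calc (2 * π)⁻¹ * ‖∫ θ in 0..2 * π, f (circleMap c R θ)‖ ≤ (2 * π)⁻¹ * (C * (2 * π)) := by
        gcongr
    _ = C := by field_simp

section DiffContOnCl

variable {G : ℂ → ℂ} {c : ℂ} {r : ℝ}

lemma DiffContOnCl.circleAverage_conj_sub_mul (hG : DiffContOnCl ℂ G (ball c r)) (hr : 0 < r) :
    Real.circleAverage (fun z => conj (z - c) * G z) c r = r ^ 2 * deriv G c := by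
  have hconj : ∀ z ∈ sphere c r, conj (z - c) = r ^ 2 / (z - c) := by
    intro z hz
    have hzc : z - c ≠ 0 := sub_ne_zero.2 (ne_of_mem_sphere hz hr.ne')
    rw [eq_div_iff hzc, mul_comm, mul_conj', ← dist_eq_norm, mem_sphere.1 hz]
  rw [circleAverage_eq_circleIntegral hr.ne',
    circleIntegral.integral_congr hr.le (g := fun z => (r : ℂ) ^ 2 • ((1 / (z - c) ^ 2) • G z)),
    circleIntegral.integral_smul, hG.deriv_eq_smul_circleIntegral hr]
  · simp only [smul_eq_mul]
    field_simp
  · intro z hz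
    simp only [smul_eq_mul, hconj z hz]
    generalize z - c = w
    ring

lemma DiffContOnCl.circleAverage_conj_sub_mul_conj (hG : DiffContOnCl ℂ G (ball c r))
    (hr : 0 < r) :
    Real.circleAverage (fun z => conj (z - c) * conj (G z)) c r = 0 := by
  have hmul : DiffContOnCl ℂ (fun z => (z - c) * G z) (ball c |r|) := by
    rw [abs_of_pos hr]
    exact ⟨(differentiableOn_id.sub_const c).mul hG.differentiableOn,
      (continuous_sub_right c).continuousOn.mul hG.continuousOn⟩
  have h := (conjCLE : ℂ →L[ℝ] ℂ).circleAverage_comp_comm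
    (hmul.continuousOn_ball.mono sphere_subset_closedBall).circleIntegrable'
  simp only [Function.comp_def, ContinuousLinearEquiv.coe_coe, conjCLE_apply, map_mul] at h
  rw [h, hmul.circleAverage, sub_self, zero_mul, map_zero]

end DiffContOnCl

lemma ContinuousOn.circleIntegrable_conj_sub_mul {F : ℂ → ℂ} {c : ℂ} {r R : ℝ}
    (hF : ContinuousOn F (ball c R)) (hr : 0 < r) (hrR : r < R) :
    CircleIntegrable (fun z => conj (z - c) * F z) c r := by
  refine ((continuous_conj.comp (continuous_sub_right c)).continuousOn.mul
    (hF.mono ?_)).circleIntegrable'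
  rw [abs_of_pos hr]
  exact sphere_subset_closedBall.trans (closedBall_subset_ball hrR)

namespace HarmonicMapOn

variable {f : ℂ → ℂ} {c : ℂ} {R : ℝ}

theorem exists_eqOn_add_conj (hf : HarmonicMapOn f (ball c R)) :
    ∃ G H : ℂ → ℂ, (∀ z ∈ ball c R, HasDerivAt G (wdz f z) z ∧
      HasDerivAt H (conj (wdzbar f z)) z) ∧ EqOn f (fun z => G z + conj (H z)) (ball c R) := by
  obtain ⟨G₀, hG₀⟩ := (hf.differentiableOn_wdz isOpen_ball).isExactOn_ball
  obtain ⟨H, hH⟩ := (hf.differentiableOn_conj_wdzbar isOpen_ball).isExactOn_ball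
  have hderiv : ∀ z ∈ ball c R,
      HasFDerivAt (fun z => f z - G₀ z - conj (H z)) (0 : ℂ →L[ℝ] ℂ) z := by
    intro z hz
    have hfz : DifferentiableAt ℝ f z :=
      (hf.contDiffOn.contDiffAt (isOpen_ball.mem_nhds hz)).differentiableAt two_ne_zero
    have hGz := (hG₀ z hz).hasFDerivAt.restrictScalars ℝ
    have hHz := ((conjCLE : ℂ →L[ℝ] ℂ).hasFDerivAt (x := H z)).comp z
      ((hH z hz).hasFDerivAt.restrictScalars ℝ)
    refine ((hfz.hasFDerivAt.sub hGz).sub hHz).congr_fderiv ?_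
    ext1 v
    simp only [sub_apply, zero_apply, fderiv_apply_eq_wdz_mul_add_wdzbar_mul_conj,
      ContinuousLinearMap.coe_restrictScalars', ContinuousLinearMap.toSpanSingleton_apply,
      smul_eq_mul, ContinuousLinearMap.comp_apply, ContinuousLinearEquiv.coe_coe, conjCLE_apply,
      map_mul, conj_conj]
    ring
  obtain ⟨a, ha⟩ := isOpen_ball.exists_is_const_of_fderiv_eq_zero
    (convex_ball c R).isPreconnected
    (fun z hz => (hderiv z hz).differentiableAt.differentiableWithinAt)
    (fun z hz => (hderiv z hz).fderiv)
  refine ⟨fun z => G₀ z + a, H, fun z hz => ⟨(hG₀ z hz).add_const a, hH z hz⟩, fun z hz => ?_⟩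
  linear_combination ha z hz

theorem circleAverage_conj_sub_mul {r : ℝ} (hf : HarmonicMapOn f (ball c R)) (hr : 0 < r)
    (hrR : r < R) : circleAverage (fun z => conj (z - c) * f z) c r = r ^ 2 * wdz f c := by
  obtain ⟨G, H, hGH, hfGH⟩ := hf.exists_eqOn_add_conj
  have hsub : closedBall c r ⊆ ball c R := closedBall_subset_ball hrR
  have hsphere : sphere c |r| ⊆ ball c R := by
    rw [abs_of_pos hr]; exact sphere_subset_closedBall.trans hsub
  have hG : DifferentiableOn ℂ G (ball c R) := fun z hz =>
    (hGH z hz).1.differentiableAt.differentiableWithinAt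
  have hH : DifferentiableOn ℂ H (ball c R) := fun z hz =>
    (hGH z hz).2.differentiableAt.differentiableWithinAt
  rw [circleAverage_congr_sphere (f₂ := fun z => conj (z - c) * G z + conj (z - c) * conj (H z))
      (fun z hz => by simp only [hfGH (hsphere hz), mul_add]),
    circleAverage_fun_add (hG.continuousOn.circleIntegrable_conj_sub_mul hr hrR)
      (ContinuousOn.circleIntegrable_conj_sub_mul (F := fun z => conj (H z))
        (continuous_conj.comp_continuousOn hH.continuousOn) hr hrR),
    (hG.diffContOnCl_ball hsub).circleAverage_conj_sub_mul hr,
    (hH.diffContOnCl_ball hsub).circleAverage_conj_sub_mul_conj hr, add_zero,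
    (hGH c (mem_ball_self (hr.trans hrR))).1.deriv]

theorem norm_wdz_sub_wdz_le {g : ℂ → ℂ} {r ε : ℝ}
    (hf : HarmonicMapOn f (ball c R)) (hg : HarmonicMapOn g (ball c R)) (hr : 0 < r)
    (hrR : r < R) (hε : ∀ z ∈ sphere c r, ‖f z - g z‖ ≤ ε) :
    ‖wdz f c - wdz g c‖ ≤ ε / r := by
  have hrepr : (r : ℂ) ^ 2 * (wdz f c - wdz g c) =
      circleAverage (fun z => conj (z - c) * (f z - g z)) c r := by
    rw [mul_sub, ← hf.circleAverage_conj_sub_mul hr hrR, ← hg.circleAverage_conj_sub_mul hr hrR,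
      ← circleAverage_fun_sub (hf.contDiffOn.continuousOn.circleIntegrable_conj_sub_mul hr hrR)
        (hg.contDiffOn.continuousOn.circleIntegrable_conj_sub_mul hr hrR)]
    simp only [mul_sub]
  have hbound : ‖circleAverage (fun z => conj (z - c) * (f z - g z)) c r‖ ≤ r * ε := by
    refine norm_circleAverage_le fun z hz => ?_
    rw [abs_of_pos hr] at hz
    rw [norm_mul, Complex.norm_conj, ← dist_eq_norm, mem_sphere.1 hz]
    exact mul_le_mul_of_nonneg_left (hε z hz) hr.le
  rw [← hrepr, norm_mul, norm_pow, norm_real, Real.norm_of_nonneg hr.le] at hbound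
  rw [le_div_iff₀ hr]
  nlinarith

end HarmonicMapOn

theorem TendstoLocallyUniformlyOn.wdz {ι : Type*} {l : Filter ι} {F : ι → ℂ → ℂ}
    {f : ℂ → ℂ} {U : Set ℂ} (h : TendstoLocallyUniformlyOn F f l U) (hU : IsOpen U)
    (hF : ∀ n, HarmonicMapOn (F n) U) (hf : HarmonicMapOn f U) :
    TendstoLocallyUniformlyOn (fun n => wdz (F n)) (wdz f) l U := by
  rw [tendstoLocallyUniformlyOn_iff_forall_isCompact hU] at h ⊢
  intro K hKU hK
  obtain ⟨δ, hδ, hδU⟩ := hK.exists_cthickening_subset_open hU hKU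
  have hunif := Metric.tendstoUniformlyOn_iff.1 (h _ hδU hK.cthickening)
  rw [Metric.tendstoUniformlyOn_iff]
  intro ε hε
  filter_upwards [hunif (ε * δ / 4) (by positivity)] with n hn c hc
  have hcδ : closedBall c δ ⊆ cthickening δ K := closedBall_subset_cthickening hc δ
  have hball : ball c δ ⊆ U := (ball_subset_closedBall.trans hcδ).trans hδU
  calc dist (_root_.wdz f c) (_root_.wdz (F n) c) ≤ ε * δ / 4 / (δ / 2) := by
        rw [dist_eq_norm]
        refine (hf.mono hball).norm_wdz_sub_wdz_le ((hF n).mono hball) (half_pos hδ)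
          (half_lt_self hδ) fun z hz => ?_
        rw [← dist_eq_norm]
        exact (hn z (hcδ (sphere_subset_closedBall.trans
          (closedBall_subset_closedBall (half_le_self hδ.le)) hz))).le
    _ < ε := by
        field_simp
        linarith

theorem TendstoLocallyUniformlyOn.wdzbar {ι : Type*} {l : Filter ι} {F : ι → ℂ → ℂ}
    {f : ℂ → ℂ} {U : Set ℂ} (h : TendstoLocallyUniformlyOn F f l U) (hU : IsOpen U)
    (hF : ∀ n, HarmonicMapOn (F n) U) (hf : HarmonicMapOn f U) :
    TendstoLocallyUniformlyOn (fun n => wdzbar (F n)) (wdzbar f) l U := by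
  have hconj := ((isometry_conj.uniformContinuous.comp_tendstoLocallyUniformlyOn h).wdz hU
    (fun n => (hF n).conj_comp hU) (hf.conj_comp hU))
  simpa only [Function.comp_def, wdz_conj_comp, conj_conj] using
    isometry_conj.uniformContinuous.comp_tendstoLocallyUniformlyOn hconj

lemma DiffContOnCl.le_norm_of_le_norm_sphere {F : ℂ → ℂ} {c : ℂ} {r m : ℝ}
    (hF : DiffContOnCl ℂ F (ball c r)) (hr : 0 < r) (hF0 : ∀ z ∈ closedBall c r, F z ≠ 0)
    (hm : 0 < m) (h : ∀ z ∈ sphere c r, m ≤ ‖F z‖) : m ≤ ‖F c‖ := by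
  have hinv := hF.inv (by rwa [closure_ball c hr.ne'])
  have hmax := Complex.norm_le_of_forall_mem_frontier_norm_le isBounded_ball hinv (C := m⁻¹)
    (fun z hz => by
      rw [frontier_ball c hr.ne'] at hz
      simpa only [Pi.inv_apply, norm_inv] using inv_anti₀ hm (h z hz))
    (subset_closure (mem_ball_self hr))
  rw [Pi.inv_apply, norm_inv] at hmax
  exact (inv_le_inv₀ (norm_pos_iff.2 (hF0 c (mem_closedBall_self hr.le))) hm).1 hmax

theorem TendstoLocallyUniformlyOn.eqOn_zero_or_forall_ne_zero {ι : Type*} {l : Filter ι}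
    [l.NeBot] {F : ι → ℂ → ℂ} {g : ℂ → ℂ} {U : Set ℂ} (h : TendstoLocallyUniformlyOn F g l U)
    (hU : IsOpen U) (hUc : IsPreconnected U) (hF : ∀ n, DifferentiableOn ℂ (F n) U)
    (hF0 : ∀ n, ∀ z ∈ U, F n z ≠ 0) : EqOn g 0 U ∨ ∀ z ∈ U, g z ≠ 0 := by
  have hg := (h.differentiableOn (Eventually.of_forall hF) hU).analyticOnNhd hU
  refine or_iff_not_imp_right.2 fun hzero => ?_
  push Not at hzero
  obtain ⟨z₀, hz₀, hgz₀⟩ := hzero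
  -- otherwise `z₀` is an isolated zero of `g`, contradicting the minimum modulus principle for
  -- `F n` on a small disc about `z₀`
  refine ((hg z₀ hz₀).eventually_eq_zero_or_eventually_ne_zero.resolve_right fun hne => ?_)
    |> hg.eqOn_zero_of_preconnected_of_eventuallyEq_zero hUc hz₀
  obtain ⟨r, hr, hball⟩ := Metric.nhds_basis_closedBall.eventually_iff.1
    (inter_mem (hU.mem_nhds hz₀) (eventually_nhdsWithin_iff.1 hne))
  have hrU : closedBall z₀ r ⊆ U := fun w hw => (hball hw).1
  have hsphere : ∀ w ∈ sphere z₀ r, g w ≠ 0 := fun w hw =>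
    (hball (sphere_subset_closedBall hw)).2 (ne_of_mem_sphere hw hr.ne')
  obtain ⟨w₀, hw₀, hmin⟩ := (isCompact_sphere z₀ r).exists_isMinOn
    (NormedSpace.sphere_nonempty.2 hr.le)
    (hg.continuousOn.mono (sphere_subset_closedBall.trans hrU)).norm
  set m := ‖g w₀‖
  have hm : 0 < m := norm_pos_iff.2 (hsphere w₀ hw₀)
  obtain ⟨n, hn⟩ := (Metric.tendstoUniformlyOn_iff.1
    ((tendstoLocallyUniformlyOn_iff_forall_isCompact hU).1 h _ hrU (isCompact_closedBall z₀ r))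
    (m / 2) (half_pos hm)).exists
  have hcenter : ‖F n z₀‖ < m / 2 := by
    simpa [hgz₀] using hn z₀ (mem_closedBall_self hr.le)
  have hF_sphere : ∀ w ∈ sphere z₀ r, m / 2 ≤ ‖F n w‖ := fun w hw => by
    have hdist := hn w (sphere_subset_closedBall hw)
    rw [dist_eq_norm] at hdist
    linarith [isMinOn_iff.1 hmin w hw, norm_sub_norm_le (g w) (F n w)]
  have := ((hF n).diffContOnCl_ball hrU).le_norm_of_le_norm_sphere hr
    (fun z hz => hF0 n z (hrU hz)) (half_pos hm) hF_sphere
  linarith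

theorem norm_lt_or_norm_eq_of_norm_le {g h : ℂ → ℂ} {U : Set ℂ} (hU : IsOpen U)
    (hUc : IsPreconnected U) (hg : DifferentiableOn ℂ g U) (hh : DifferentiableOn ℂ h U)
    (hg0 : ∀ z ∈ U, g z ≠ 0) (hle : ∀ z ∈ U, ‖h z‖ ≤ ‖g z‖) :
    (∀ z ∈ U, ‖h z‖ < ‖g z‖) ∨ ∀ z ∈ U, ‖h z‖ = ‖g z‖ := by
  refine or_iff_not_imp_left.2 fun hlt => ?_
  push Not at hlt
  obtain ⟨z₀, hz₀, hz₀le⟩ := hlt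
  have hnorm : ∀ z ∈ U, ‖h z / g z‖ = 1 ↔ ‖h z‖ = ‖g z‖ := fun z hz => by
    rw [norm_div, div_eq_one_iff_eq (norm_ne_zero_iff.2 (hg0 z hz))]
  have hz₀1 : ‖h z₀ / g z₀‖ = 1 := (hnorm z₀ hz₀).2 (le_antisymm (hle z₀ hz₀) hz₀le)
  have hmax : IsMaxOn (norm ∘ fun z => h z / g z) U z₀ := fun z hz => by
    change ‖h z / g z‖ ≤ ‖h z₀ / g z₀‖
    rw [hz₀1, norm_div, div_le_one (norm_pos_iff.2 (hg0 z hz))]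
    exact hle z hz
  intro z hz
  have heq : ‖h z / g z‖ = ‖h z₀ / g z₀‖ :=
    Complex.norm_eqOn_of_isPreconnected_of_isMaxOn hUc hU (hh.div hg hg0) hz₀ hmax hz
  exact (hnorm z hz).1 (heq.trans hz₀1)

lemma jac_pos_iff {f : ℂ → ℂ} {z : ℂ} : 0 < jac f z ↔ ‖wdzbar f z‖ < ‖wdz f z‖ := by
  rw [jac, sub_pos, sq_lt_sq₀ (norm_nonneg _) (norm_nonneg _)]

lemma jac_eq_zero_iff {f : ℂ → ℂ} {z : ℂ} : jac f z = 0 ↔ ‖wdzbar f z‖ = ‖wdz f z‖ := by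
  rw [jac, sub_eq_zero, sq_eq_sq₀ (norm_nonneg _) (norm_nonneg _), eq_comm]

lemma wdz_ne_zero_of_jac_pos {f : ℂ → ℂ} {z : ℂ} (h : 0 < jac f z) : wdz f z ≠ 0 := fun h0 =>
  (norm_nonneg _).not_gt (by simpa [h0] using jac_pos_iff.1 h)

theorem stmt18_general (Ω : Set ℂ) (hΩ : IsOpen Ω) (hΩc : IsConnected Ω)
    (fk : ℕ → ℂ → ℂ) (f : ℂ → ℂ)
    (hsm : ∀ n, ContDiffOn ℝ 2 (fk n) Ω)
    (hharm : ∀ n, ∀ z ∈ Ω, wdzbar (fun w => wdz (fk n) w) z = 0)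
    (hJk : ∀ n, ∀ z ∈ Ω, 0 < jac (fk n) z)
    (hconv : TendstoLocallyUniformlyOn fk f atTop Ω)
    (hfsm : ContDiffOn ℝ 2 f Ω)
    (hfharm : ∀ z ∈ Ω, wdzbar (fun w => wdz f w) z = 0) :
    TendstoLocallyUniformlyOn (fun n z => wdz (fk n) z) (fun z => wdz f z) atTop Ω ∧
    ((∀ z ∈ Ω, 0 < jac f z) ∨ (∀ z ∈ Ω, jac f z = 0)) := by
  have hF : ∀ n, HarmonicMapOn (fk n) Ω := fun n => ⟨hsm n, hharm n⟩
  have hf : HarmonicMapOn f Ω := ⟨hfsm, hfharm⟩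
  have hdz := hconv.wdz hΩ hF hf
  have hle : ∀ z ∈ Ω, ‖wdzbar f z‖ ≤ ‖wdz f z‖ := fun z hz =>
    le_of_tendsto_of_tendsto' ((hconv.wdzbar hΩ hF hf).tendsto_at hz).norm (hdz.tendsto_at hz).norm
      fun n => (jac_pos_iff.1 (hJk n z hz)).le
  refine ⟨hdz, ?_⟩
  simp only [jac_pos_iff, jac_eq_zero_iff]
  rcases hdz.eqOn_zero_or_forall_ne_zero hΩ hΩc.isPreconnected
    (fun n => (hF n).differentiableOn_wdz hΩ)
    (fun n z hz => wdz_ne_zero_of_jac_pos (hJk n z hz)) with hzero | hne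
  · exact Or.inr fun z hz => le_antisymm (hle z hz) (by simp [hzero hz])
  · simpa only [Complex.norm_conj] using norm_lt_or_norm_eq_of_norm_le hΩ hΩc.isPreconnected
      (hf.differentiableOn_wdz hΩ) (hf.differentiableOn_conj_wdzbar hΩ) hne
      (by simpa only [Complex.norm_conj] using hle)

/-- Harmonic Hurwitz lemma: locally uniform limits of injective harmonic maps with positive
Jacobian have converging derivatives and satisfy the dichotomy J > 0 everywhere or J ≡ 0. -/
theorem stmt18 (Ω : Set ℂ) (hΩ : IsOpen Ω) (hΩc : IsConnected Ω)
    (fk : ℕ → ℂ → ℂ) (f : ℂ → ℂ)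
    (hsm : ∀ n, ContDiffOn ℝ 2 (fk n) Ω)
    (hharm : ∀ n, ∀ z ∈ Ω, wdzbar (fun w => wdz (fk n) w) z = 0)
    (hinj : ∀ n, Set.InjOn (fk n) Ω)
    (hJk : ∀ n, ∀ z ∈ Ω, 0 < jac (fk n) z)
    (hconv : TendstoLocallyUniformlyOn fk f atTop Ω)
    (hfsm : ContDiffOn ℝ 2 f Ω)
    (hfharm : ∀ z ∈ Ω, wdzbar (fun w => wdz f w) z = 0) :
    TendstoLocallyUniformlyOn (fun n z => wdz (fk n) z) (fun z => wdz f z) atTop Ω ∧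
    ((∀ z ∈ Ω, 0 < jac f z) ∨ (∀ z ∈ Ω, jac f z = 0)) :=
  stmt18_general Ω hΩ hΩc fk f hsm hharm hJk hconv hfsm hfharm
end
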